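/- arXiv:2203.03394 — 6 statements merged into one kernel-verified Lean document; each statement's English description precedes it below -/
import Mathlib

section
/- For every positive integer m there exist nodes t_1, …, t_{m−1} ∈ (0,1), t_m = 1, and weights w_1, …, w_m > 0 with w_m = 1/m², such that: (i) ln x − r_m(x) ≥ 0 for all x > 0, where r_m(x) = Σ_{i=1}^m w_i f_{t_i}(x); and (ii) there exist constants C > 0 and δ > 0 such that |ln x − r_m(x)| ≤ C·|x − 1|^{2m} for all x > 0 with |x − 1| < δ. -/
/-!
For `x > 0`, `x ≠ 1` put `a = 1 / (1 - x)`, a point outside `[0, 1]`. Then `f_s(x) = 1 / (s - a)`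
and `ln x = ∫₀¹ f_s(x) ds`, so `r_m(x)` is a quadrature rule on `[0, 1]` applied to the Cauchy
kernel `1 / (s - a)`.

With `n = m - 1`, the interior nodes are the zeros of `R = D^n (X^n (X - 1)^(n+1)) / (X - 1)`, a
shifted Jacobi polynomial. By Rolle they are `n` distinct points of `(0, 1)`, and `n` integrations
by parts show that `(X - 1) R` is orthogonal to all polynomials of degree `< n`. So the
interpolatory rule on these nodes and `1` is exact up to degree `2n`; this makes every weight
`∫ ℓ_t²` positive and gives `w_m = ∫ R / R(1) = 1 / m²`.

`Φ = (X - 1) R²` vanishes at all nodes, and `1 / (s - a) - Φ(s) / (Φ(a) (s - a))` is a polynomial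
in `s` of degree `≤ 2n`, so the error is `∫₀¹ Φ(s) / (Φ(a) (s - a)) ds`. Its integrand is `≥ 0` on
`[0, 1]`, and at most `(2 |x - 1|)^(2m)` when `|x - 1| < 1/2`.
-/

/-- The function `f_t(x) = (x-1)/(t(x-1)+1)`. -/
noncomputable def ft (t x : ℝ) : ℝ := (x - 1) / (t * (x - 1) + 1)

open Polynomial Finset

theorem Polynomial.eval_iterate_derivative_eq_zero_of_pow_dvd {R : Type*} [CommRing R]
    {p : R[X]} {c : R} {m j : ℕ} (h : (X - C c) ^ m ∣ p) (hj : j < m) :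
    (derivative^[j] p).eval c = 0 := by
  obtain ⟨r, hr⟩ := pow_sub_dvd_iterate_derivative_of_pow_dvd j h
  simp [hr, Nat.sub_ne_zero_of_lt hj]

theorem Polynomial.eq_C_leadingCoeff_mul_nodal {F : Type*} [Field F] {p : F[X]} {S : Finset F}
    (hS : ∀ t ∈ S, p.eval t = 0) (hdeg : p.natDegree ≤ #S) :
    p = C p.leadingCoeff * Lagrange.nodal S id := by
  rcases eq_or_ne p 0 with rfl | hp
  · simp
  have hcard : #S ≤ p.natDegree :=
    card_le_degree_of_subset_roots fun t ht => (mem_roots hp).mpr (hS t ht)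
  have hdegp : p.degree = #S := by
    rw [degree_eq_natDegree hp]
    exact_mod_cast le_antisymm hdeg hcard
  refine eq_of_degree_sub_lt_of_eval_finset_eq S ?_ fun t ht => ?_
  · refine hdegp ▸ degree_sub_lt_left ?_ hp ?_
    · rw [degree_C_mul (leadingCoeff_ne_zero.mpr hp), Lagrange.degree_nodal, hdegp]
    · simp [Lagrange.nodal_monic]
  · simp [hS t ht, Lagrange.eval_nodal, prod_eq_zero ht]

theorem Polynomial.card_roots_Ioo_lt_card_roots_derivative_Ioo {p : ℝ[X]} (hp : derivative p ≠ 0)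
    {a b : ℝ} (hab : a < b) (ha : p.IsRoot a) (hb : p.IsRoot b) :
    #{x ∈ p.roots.toFinset | x ∈ Set.Ioo a b} <
      #{x ∈ (derivative p).roots.toFinset | x ∈ Set.Ioo a b} := by
  have hp0 : p ≠ 0 := fun h => hp (by rw [h, derivative_zero])
  set Z := {x ∈ p.roots.toFinset | x ∈ Set.Ioo a b}
  have hZ : ∀ x ∈ insert a (insert b Z), p.IsRoot x ∧ x ∈ Set.Icc a b := by
    simp only [mem_insert, Z, mem_filter, Multiset.mem_toFinset, mem_roots hp0]
    rintro x (rfl | rfl | ⟨hx, hxab⟩)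
    exacts [⟨ha, le_rfl, hab.le⟩, ⟨hb, hab.le, le_rfl⟩, ⟨hx, Set.Ioo_subset_Icc_self hxab⟩]
  have hcard : #(insert a (insert b Z)) = #Z + 2 := by
    rw [card_insert_of_notMem, card_insert_of_notMem] <;>
      simp [Z, hab.ne]
  have := card_le_of_interleaved (s := insert a (insert b Z))
    (t := {x ∈ (derivative p).roots.toFinset | x ∈ Set.Ioo a b})
    fun x hx y hy hxy _ => by
      obtain ⟨z, hz, hz'⟩ := exists_deriv_eq_zero hxy p.continuousOn
        ((hZ x hx).1.trans (hZ y hy).1.symm)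
      refine ⟨z, ?_, hz⟩
      simp only [mem_filter, Multiset.mem_toFinset, mem_roots hp, IsRoot, ← p.deriv, hz', true_and]
      exact ⟨(hZ x hx).2.1.trans_lt hz.1, hz.2.trans_le (hZ y hy).2.2⟩
  omega

namespace Finset

variable {α : Type*} [LinearOrder α] {S : Finset α} {b : α} {n : ℕ}

theorem orderEmbOfFin_insert_of_val_eq (hb : ∀ t ∈ S, t < b) (h : #(insert b S) = n + 1)
    {i : Fin (n + 1)} (hi : (i : ℕ) = n) : (insert b S).orderEmbOfFin h i = b := by
  rw [show i = ⟨n + 1 - 1, by omega⟩ from Fin.ext hi, orderEmbOfFin_last h n.succ_pos]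
  refine le_antisymm (max'_le _ _ _ fun t ht => ?_) (le_max' _ _ (mem_insert_self b S))
  rcases mem_insert.mp ht with rfl | ht
  exacts [le_rfl, (hb t ht).le]

theorem orderEmbOfFin_insert_mem_of_val_lt (hb : ∀ t ∈ S, t < b) (h : #(insert b S) = n + 1)
    {i : Fin (n + 1)} (hi : (i : ℕ) < n) : (insert b S).orderEmbOfFin h i ∈ S := by
  have hlt : (insert b S).orderEmbOfFin h i < b :=
    ((orderEmbOfFin _ h).strictMono (Fin.mk_lt_mk.mpr hi : i < Fin.last n)).trans_eq
      (orderEmbOfFin_insert_of_val_eq hb h rfl)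
  exact (mem_insert.mp (orderEmbOfFin_mem _ h i)).resolve_left hlt.ne

end Finset

namespace GaussRadau

noncomputable def integral01 : ℝ[X] →ₗ[ℝ] ℝ where
  toFun p := ∫ s in (0 : ℝ)..1, p.eval s
  map_add' p q := by
    simp only [eval_add]
    exact intervalIntegral.integral_add (p.continuous.intervalIntegrable 0 1)
      (q.continuous.intervalIntegrable 0 1)
  map_smul' c p := by
    simp only [eval_smul, smul_eq_mul, RingHom.id_apply]
    exact intervalIntegral.integral_const_mul c _

theorem integral01_apply (p : ℝ[X]) : integral01 p = ∫ s in (0 : ℝ)..1, p.eval s := rfl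

theorem integral01_C_mul (c : ℝ) (p : ℝ[X]) : integral01 (C c * p) = c * integral01 p := by
  rw [← smul_eq_C_mul, map_smul, smul_eq_mul]

theorem integral01_derivative (p : ℝ[X]) : integral01 (derivative p) = p.eval 1 - p.eval 0 :=
  intervalIntegral.integral_eq_sub_of_hasDerivAt (fun s _ => p.hasDerivAt s)
    ((derivative p).continuous.intervalIntegrable 0 1)

theorem integral01_X_pow (k : ℕ) : integral01 (X ^ k) = 1 / (k + 1) := by
  simp [integral01_apply]

theorem integral01_sq_pos {p : ℝ[X]} {c : ℝ} (hc : c ∈ Set.Icc (0 : ℝ) 1) (hpc : p.eval c ≠ 0) :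
    0 < integral01 (p ^ 2) := by
  refine intervalIntegral.integral_pos zero_lt_one (Polynomial.continuousOn _)
    (fun s _ => by simp [sq_nonneg]) ⟨c, hc, ?_⟩
  simpa using pow_pos (abs_pos.mpr hpc) 2 |>.trans_eq (sq_abs _)

noncomputable def weight (N : Finset ℝ) (t : ℝ) : ℝ := integral01 (Lagrange.basis N id t)

def IsExactUpTo (N : Finset ℝ) (d : ℕ) : Prop :=
  ∀ p : ℝ[X], p.natDegree ≤ d → integral01 p = ∑ t ∈ N, weight N t * p.eval t

theorem integral01_eq_sum_weight_of_degree_lt {N : Finset ℝ} {p : ℝ[X]} (hp : p.degree < #N) :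
    integral01 p = ∑ t ∈ N, weight N t * p.eval t := by
  conv_lhs => rw [Lagrange.eq_interpolate (v := id) (Set.injOn_id _) hp, Lagrange.interpolate_apply]
  simp only [map_sum, integral01_C_mul, weight, id_eq]
  exact sum_congr rfl fun _ _ => mul_comm _ _

theorem isExactUpTo_of_orthogonal {N : Finset ℝ} (hN : N.Nonempty) {k : ℕ}
    (horth : ∀ r : ℝ[X], r.natDegree < k → integral01 (Lagrange.nodal N id * r) = 0) :
    IsExactUpTo N (#N + k - 1) := by
  intro p hp
  set ω := Lagrange.nodal N id
  have hω : ω.Monic := Lagrange.nodal_monic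
  have hsplit : p %ₘ ω + ω * (p /ₘ ω) = p := modByMonic_add_div p ω
  have hrem : (p %ₘ ω).degree < #N := by
    simpa [ω, Lagrange.degree_nodal] using degree_modByMonic_lt p hω
  have hquo : integral01 (ω * (p /ₘ ω)) = 0 := by
    rcases eq_or_ne (p /ₘ ω) 0 with h0 | h0
    · rw [h0, mul_zero, map_zero]
    · have hle : #N ≤ p.natDegree := by
        simpa [ω, Lagrange.natDegree_nodal] using
          natDegree_le_natDegree (not_lt.mp (mt (divByMonic_eq_zero_iff hω).mpr h0))
      refine horth _ ?_
      rw [natDegree_divByMonic _ hω, Lagrange.natDegree_nodal]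
      have := hN.card_pos
      omega
  have hnodes : ∀ t ∈ N, (p %ₘ ω).eval t = p.eval t := fun t ht => by
    conv_rhs => rw [← hsplit]
    simp [ω, Lagrange.eval_nodal, prod_eq_zero ht]
  rw [← hsplit, map_add, hquo, add_zero, integral01_eq_sum_weight_of_degree_lt hrem]
  exact sum_congr rfl fun t ht => by rw [hnodes t ht, hsplit]

theorem weight_pos {N : Finset ℝ} (hex : IsExactUpTo N (2 * (#N - 1))) {t : ℝ} (ht : t ∈ N)
    (ht01 : t ∈ Set.Icc (0 : ℝ) 1) : 0 < weight N t := by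
  set ℓ := Lagrange.basis N id t
  have hdeg : (ℓ ^ 2).natDegree ≤ 2 * (#N - 1) := by
    rw [natDegree_pow, Lagrange.natDegree_basis (Set.injOn_id _) ht, mul_comm]
  have hℓt : ℓ.eval t = 1 := Lagrange.eval_basis_self (v := id) (Set.injOn_id _) ht
  have hsum : integral01 (ℓ ^ 2) = weight N t := by
    rw [hex _ hdeg, sum_eq_single t (fun u hu hut => ?_) (fun h => absurd ht h), eval_pow, hℓt,
      one_pow, mul_one]
    have := Lagrange.eval_basis_of_ne (v := id) hut.symm hu
    simp_all [ℓ]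
  exact hsum ▸ integral01_sq_pos ht01 (by rw [hℓt]; exact one_ne_zero)

noncomputable def errorKernel (Φ : ℝ[X]) (a s : ℝ) : ℝ := Φ.eval s / (Φ.eval a * (s - a))

theorem integral_inv_sub_sub_sum_weight {N : Finset ℝ} {d : ℕ} (hex : IsExactUpTo N d)
    {Φ : ℝ[X]} (hΦ : Φ.natDegree ≤ d + 1) (hΦN : ∀ t ∈ N, Φ.eval t = 0)
    {a : ℝ} (ha : a ∉ Set.Icc (0 : ℝ) 1) (hΦa : Φ.eval a ≠ 0) :
    (∫ s in (0 : ℝ)..1, (s - a)⁻¹) - ∑ t ∈ N, weight N t * (t - a)⁻¹ =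
      ∫ s in (0 : ℝ)..1, errorKernel Φ a s := by
  set q := (C (Φ.eval a) - Φ) /ₘ (X - C a)
  have hq : ∀ s, Φ.eval a - Φ.eval s = (s - a) * q.eval s := fun s => by
    have := (mul_divByMonic_eq_iff_isRoot (a := a) (p := C (Φ.eval a) - Φ)).mpr (by simp)
    simpa [q] using (congrArg (eval s) this).symm
  set P := C (Φ.eval a)⁻¹ * q
  have hPdeg : P.natDegree ≤ d := by
    refine natDegree_C_mul_le _ _ |>.trans ?_
    rw [natDegree_divByMonic _ (monic_X_sub_C a), natDegree_X_sub_C]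
    have := natDegree_sub_le (C (Φ.eval a)) Φ
    rw [natDegree_C] at this
    omega
  have hkernel : ∀ s, s ≠ a → (s - a)⁻¹ - errorKernel Φ a s = P.eval s := by
    intro s hs
    have hs' : s - a ≠ 0 := sub_ne_zero.mpr hs
    simp only [errorKernel, P, eval_mul, eval_C]
    field_simp
    linear_combination hq s
  have hnodes : ∀ t ∈ N, (t - a)⁻¹ = P.eval t := fun t ht => by
    have hta : t ≠ a := fun h => hΦa (h ▸ hΦN t ht)
    simpa [errorKernel, hΦN t ht] using hkernel t hta
  have hsa : ∀ s ∈ Set.uIcc (0 : ℝ) 1, s ≠ a := fun s hs h =>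
    ha (h ▸ by rwa [Set.uIcc_of_le zero_le_one] at hs)
  have hint : IntervalIntegrable (fun s => (s - a)⁻¹) MeasureTheory.volume 0 1 :=
    ((continuousOn_id.sub continuousOn_const).inv₀
      fun s hs => sub_ne_zero.mpr (hsa s hs)).intervalIntegrable
  calc (∫ s in (0 : ℝ)..1, (s - a)⁻¹) - ∑ t ∈ N, weight N t * (t - a)⁻¹
      = (∫ s in (0 : ℝ)..1, (s - a)⁻¹) - integral01 P := by
        rw [hex P hPdeg]
        exact congrArg _ (sum_congr rfl fun t ht => by rw [hnodes t ht])
    _ = ∫ s in (0 : ℝ)..1, errorKernel Φ a s := by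
        rw [integral01_apply, ← intervalIntegral.integral_sub hint
          (P.continuous.intervalIntegrable 0 1)]
        refine intervalIntegral.integral_congr fun s hs => ?_
        simp only [← hkernel s (hsa s hs), sub_sub_cancel]

theorem abs_eval_nodal_le_one {S : Finset ℝ} (hS : ∀ t ∈ S, t ∈ Set.Icc (0 : ℝ) 1) {s : ℝ}
    (hs : s ∈ Set.Icc (0 : ℝ) 1) : |(Lagrange.nodal S id).eval s| ≤ 1 := by
  rw [Lagrange.eval_nodal, abs_prod]
  exact prod_le_one (fun _ _ => abs_nonneg _) fun t ht => by
    simp only [id]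
    exact abs_le.mpr ⟨by linarith [(hS t ht).2, hs.1], by linarith [(hS t ht).1, hs.2]⟩

theorem one_le_pow_card_mul_abs_eval_nodal {S : Finset ℝ} {ρ a : ℝ}
    (h : ∀ t ∈ S, 1 ≤ ρ * |t - a|) : 1 ≤ ρ ^ #S * |(Lagrange.nodal S id).eval a| := by
  rw [Lagrange.eval_nodal, abs_prod, ← prod_const, ← prod_mul_distrib]
  calc (1 : ℝ) = ∏ _t ∈ S, (1 : ℝ) := prod_const_one.symm
    _ ≤ ∏ t ∈ S, ρ * |a - id t| :=
      prod_le_prod (fun _ _ => zero_le_one) fun t ht => by simpa [abs_sub_comm] using h t ht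

theorem errorKernel_nonneg (π : ℝ[X]) {a s : ℝ} (ha : a ∉ Set.Icc (0 : ℝ) 1)
    (hs : s ∈ Set.Icc (0 : ℝ) 1) : 0 ≤ errorKernel ((X - 1) * π ^ 2) a s := by
  simp only [errorKernel, eval_mul, eval_pow, eval_sub, eval_X, eval_one]
  have hnum : (s - 1) * π.eval s ^ 2 ≤ 0 :=
    mul_nonpos_of_nonpos_of_nonneg (by linarith [hs.2]) (sq_nonneg _)
  have hsign : (a - 1) * (s - a) ≤ 0 := by
    by_cases h0 : 0 ≤ a
    · have h1 : 1 < a := by by_contra h; exact ha ⟨h0, not_lt.mp h⟩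
      nlinarith [hs.2]
    · nlinarith [hs.1]
  have hden : (a - 1) * π.eval a ^ 2 * (s - a) ≤ 0 := by
    rw [mul_right_comm]
    exact mul_nonpos_of_nonpos_of_nonneg hsign (sq_nonneg _)
  exact div_nonneg_of_nonpos hnum hden

theorem abs_errorKernel_le {S : Finset ℝ} (hS : ∀ t ∈ S, t ∈ Set.Icc (0 : ℝ) 1) {ρ a s : ℝ}
    (haρ : ∀ t ∈ Set.Icc (0 : ℝ) 1, 1 ≤ ρ * |t - a|) (hs : s ∈ Set.Icc (0 : ℝ) 1) :
    |errorKernel ((X - 1) * Lagrange.nodal S id ^ 2) a s| ≤ ρ ^ (2 * #S + 2) := by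
  simp only [errorKernel, eval_mul, eval_pow, eval_sub, eval_X, eval_one, abs_div, abs_mul,
    abs_pow]
  have hnum : |s - 1| * |(Lagrange.nodal S id).eval s| ^ 2 ≤ 1 := by
    have h1 : |s - 1| ≤ 1 := abs_le.mpr ⟨by linarith [hs.1], by linarith [hs.2]⟩
    have h2 := abs_eval_nodal_le_one hS hs
    nlinarith [abs_nonneg (s - 1), abs_nonneg ((Lagrange.nodal S id).eval s)]
  have hden : 1 ≤ ρ ^ (2 * #S + 2) *
      (|a - 1| * |(Lagrange.nodal S id).eval a| ^ 2 * |s - a|) := by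
    have h1 : 1 ≤ ρ * |a - 1| := by simpa [abs_sub_comm] using haρ 1 ⟨zero_le_one, le_rfl⟩
    have h2 := one_le_pow_card_mul_abs_eval_nodal (a := a) fun t ht => haρ t (hS t ht)
    have h3 := haρ s hs
    calc (1 : ℝ) ≤ (ρ * |a - 1|) * (ρ ^ #S * |(Lagrange.nodal S id).eval a|) ^ 2 * (ρ * |s - a|) :=
          one_le_mul_of_one_le_of_one_le
            (one_le_mul_of_one_le_of_one_le h1 (one_le_pow₀ h2)) h3
      _ = _ := by ring
  have hpos : 0 < |a - 1| * |(Lagrange.nodal S id).eval a| ^ 2 * |s - a| :=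
    (by positivity : (0 : ℝ) ≤ _).lt_of_ne fun h => by rw [← h, mul_zero] at hden; linarith
  rw [div_le_iff₀ hpos]
  linarith

theorem ft_denom_pos {s x : ℝ} (hs : s ∈ Set.Icc (0 : ℝ) 1) (hx : 0 < x) : 0 < s * (x - 1) + 1 := by
  rcases le_total x 1 with h | h
  · nlinarith [mul_nonneg (sub_nonneg.mpr hs.2) (sub_nonneg.mpr h)]
  · nlinarith [mul_nonneg hs.1 (sub_nonneg.mpr h)]

-- Where `s * (x - 1) + 1 = 0` both sides are `0`, through `y / 0 = 0` and `0⁻¹ = 0`.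
theorem ft_eq_inv_sub {s x : ℝ} (hx1 : x ≠ 1) :
    ft s x = (s - (1 - x)⁻¹)⁻¹ := by
  have hx1' : 1 - x ≠ 0 := sub_ne_zero.mpr hx1.symm
  have h : s - (1 - x)⁻¹ = -(s * (x - 1) + 1) / (1 - x) := by
    field_simp
    ring
  rw [ft, h, inv_div, div_neg, ← neg_div, neg_sub]

theorem integral_ft_eq_log {x : ℝ} (hx : 0 < x) : ∫ s in (0 : ℝ)..1, ft s x = Real.log x := by
  have hderiv : ∀ s ∈ Set.uIcc (0 : ℝ) 1,
      HasDerivAt (fun u => Real.log (u * (x - 1) + 1)) (ft s x) s := fun s hs => by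
    rw [Set.uIcc_of_le zero_le_one] at hs
    have := ((hasDerivAt_id s).mul_const (x - 1)).add_const 1 |>.log (ft_denom_pos hs hx).ne'
    simpa [ft] using this
  have hcont : ContinuousOn (fun s => ft s x) (Set.uIcc 0 1) := by
    rw [Set.uIcc_of_le zero_le_one]
    exact continuousOn_const.div (by fun_prop) fun s hs => (ft_denom_pos hs hx).ne'
  rw [intervalIntegral.integral_eq_sub_of_hasDerivAt hderiv hcont.intervalIntegrable]
  simp

theorem inv_one_sub_notMem_Icc {x : ℝ} (hx : 0 < x) (hx1 : x ≠ 1) :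
    (1 - x)⁻¹ ∉ Set.Icc (0 : ℝ) 1 := by
  rintro ⟨h0, h1⟩
  rcases hx1.lt_or_gt with hlt | hgt
  · exact h1.not_gt ((one_lt_inv₀ (by linarith)).mpr (by linarith))
  · exact h0.not_gt (inv_lt_zero.mpr (by linarith))

theorem one_le_two_mul_abs_mul_abs_sub {x t : ℝ} (hx : |x - 1| < 1 / 2) (hx1 : x ≠ 1)
    (ht : t ∈ Set.Icc (0 : ℝ) 1) : 1 ≤ 2 * |x - 1| * |t - (1 - x)⁻¹| := by
  have hx1' : 1 - x ≠ 0 := sub_ne_zero.mpr hx1.symm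
  have hprod : |x - 1| * |t - (1 - x)⁻¹| = |1 - t * (1 - x)| := by
    rw [abs_sub_comm x, ← abs_mul, mul_sub, mul_inv_cancel₀ hx1', abs_sub_comm, mul_comm]
  have htx : |t * (1 - x)| ≤ |x - 1| := by
    rw [abs_mul, abs_sub_comm 1 x]
    exact mul_le_of_le_one_left (abs_nonneg _) (abs_le.mpr ⟨by linarith [ht.1], ht.2⟩)
  have := abs_sub_abs_le_abs_sub 1 (t * (1 - x))
  rw [abs_one] at this
  linarith

theorem integral01_iterate_derivative_mul {F : ℝ[X]} {k : ℕ}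
    (hF : ∀ j < k, (derivative^[j] F).eval 0 = 0 ∧ (derivative^[j] F).eval 1 = 0) (s : ℝ[X]) :
    integral01 (derivative^[k] F * s) = (-1) ^ k * integral01 (F * derivative^[k] s) := by
  induction k generalizing s with
  | zero => simp
  | succ k ih =>
    have hsplit : derivative^[k + 1] F * s =
        derivative (derivative^[k] F * s) - derivative^[k] F * derivative s := by
      rw [Function.iterate_succ_apply', derivative_mul]
      ring
    obtain ⟨h0, h1⟩ := hF k k.lt_succ_self
    rw [hsplit, map_sub, integral01_derivative, eval_mul, eval_mul, h0, h1,
      ih (fun j hj => hF j (hj.trans k.lt_succ_self)), ← Function.iterate_succ_apply]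
    ring

noncomputable def rodrigues (n : ℕ) : ℝ[X] := X ^ n * (X - 1) ^ (n + 1)

theorem eval_iterate_derivative_rodrigues {n j : ℕ} (hj : j < n) :
    (derivative^[j] (rodrigues n)).eval 0 = 0 ∧ (derivative^[j] (rodrigues n)).eval 1 = 0 :=
  ⟨eval_iterate_derivative_eq_zero_of_pow_dvd (m := n) (by simp [rodrigues]) hj,
    eval_iterate_derivative_eq_zero_of_pow_dvd (m := n + 1) (by simp [rodrigues]) (by omega)⟩

theorem integral01_iterate_derivative_rodrigues_mul {n : ℕ} {r : ℝ[X]} (hr : r.natDegree < n) :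
    integral01 (derivative^[n] (rodrigues n) * r) = 0 := by
  rw [integral01_iterate_derivative_mul (fun j => eval_iterate_derivative_rodrigues),
    iterate_derivative_eq_zero hr, mul_zero, map_zero, mul_zero]

/-- The cofactor of `(X - 1) ^ (n + 1 - j)` in `derivative^[j] (rodrigues n)`. -/
noncomputable def rodriguesCofactor (n : ℕ) : ℕ → ℝ[X]
  | 0 => X ^ n
  | j + 1 => C ((n : ℝ) + 1 - j) * rodriguesCofactor n j +
      (X - 1) * derivative (rodriguesCofactor n j)

theorem iterate_derivative_rodrigues {n j : ℕ} (hj : j ≤ n + 1) :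
    derivative^[j] (rodrigues n) = (X - 1) ^ (n + 1 - j) * rodriguesCofactor n j := by
  induction j with
  | zero => simp [rodrigues, rodriguesCofactor, mul_comm]
  | succ j ih =>
    obtain ⟨k, hk⟩ : ∃ k, n + 1 = j + (k + 1) := ⟨n - j, by omega⟩
    have hc : (n : ℝ) + 1 - j = k + 1 := by
      have : ((n + 1 : ℕ) : ℝ) = ((j + (k + 1) : ℕ) : ℝ) := congrArg _ hk
      push_cast at this
      linarith
    rw [Function.iterate_succ_apply', ih (by omega), show n + 1 - j = k + 1 by omega,
      show n + 1 - (j + 1) = k by omega, rodriguesCofactor, hc]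
    simp only [derivative_mul, derivative_pow, derivative_sub, derivative_X, derivative_one,
      map_add, map_one, Nat.cast_add, Nat.cast_one, Nat.add_sub_cancel]
    ring

theorem natDegree_rodriguesCofactor_le (n j : ℕ) : (rodriguesCofactor n j).natDegree ≤ n := by
  induction j with
  | zero => simp [rodriguesCofactor]
  | succ j ih =>
    rw [rodriguesCofactor]
    refine natDegree_add_le_of_degree_le ((natDegree_C_mul_le _ _).trans ih) ?_
    rcases eq_or_ne (rodriguesCofactor n j).natDegree 0 with h0 | h0
    · simp [derivative_of_natDegree_zero h0]
    · have h1 : (X - 1 : ℝ[X]).natDegree = 1 := by simpa using natDegree_X_sub_C (1 : ℝ)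
      have h2 := natDegree_derivative_lt h0
      exact natDegree_mul_le.trans (by omega)

theorem eval_one_rodriguesCofactor {n j : ℕ} (hj : j ≤ n) :
    (rodriguesCofactor n j).eval 1 = (n + 1).descFactorial j := by
  induction j with
  | zero => simp [rodriguesCofactor]
  | succ j ih =>
    rw [rodriguesCofactor, Nat.descFactorial_succ, Nat.cast_mul, Nat.cast_sub (by omega),
      ← ih (by omega)]
    simp only [eval_add, eval_mul, eval_C, eval_sub, eval_X, eval_one, sub_self, zero_mul,
      add_zero]
    push_cast
    ring

theorem eval_one_rodriguesCofactor_pos {n j : ℕ} (hj : j ≤ n) :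
    0 < (rodriguesCofactor n j).eval 1 := by
  rw [eval_one_rodriguesCofactor hj]
  exact_mod_cast Nat.descFactorial_pos.mpr (by omega)

theorem eval_zero_rodriguesCofactor {n j : ℕ} (hj : j < n) :
    (rodriguesCofactor n j).eval 0 = 0 := by
  have h := (eval_iterate_derivative_rodrigues hj).1
  rw [iterate_derivative_rodrigues (by omega), eval_mul, eval_pow] at h
  simpa using h

theorem integral01_C_mul_add_X_sub_one_mul_derivative (c : ℝ) (p : ℝ[X]) :
    integral01 (C c * p + (X - 1) * derivative p) = (c - 1) * integral01 p + p.eval 0 := by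
  have h : (X - 1) * derivative p = derivative ((X - 1) * p) - p := by
    simp [derivative_mul]
  rw [h, map_add, map_sub, integral01_C_mul, integral01_derivative]
  simp only [eval_mul, eval_sub, eval_X, eval_one]
  ring

theorem integral01_rodriguesCofactor {n j : ℕ} (hj : j ≤ n) :
    integral01 (rodriguesCofactor n j) = n.descFactorial j / (n + 1) := by
  induction j with
  | zero => simp [rodriguesCofactor, integral01_X_pow]
  | succ j ih =>
    rw [rodriguesCofactor, integral01_C_mul_add_X_sub_one_mul_derivative, ih (by omega),
      eval_zero_rodriguesCofactor (by omega), Nat.descFactorial_succ, Nat.cast_mul,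
      Nat.cast_sub (by omega)]
    ring

theorem integral01_div_eval_one_rodriguesCofactor (n : ℕ) :
    integral01 (rodriguesCofactor n n) / (rodriguesCofactor n n).eval 1 = 1 / (n + 1) ^ 2 := by
  have hfac : (n + 1).descFactorial n = (n + 1) * n.factorial := by
    simpa [Nat.factorial_succ] using Nat.factorial_mul_descFactorial (n.le_succ)
  rw [integral01_rodriguesCofactor le_rfl, eval_one_rodriguesCofactor le_rfl,
    Nat.descFactorial_self, hfac]
  push_cast
  field_simp

theorem iterate_derivative_rodrigues_ne_zero {n j : ℕ} (hj : j ≤ n) :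
    derivative^[j] (rodrigues n) ≠ 0 := by
  rw [iterate_derivative_rodrigues (by omega)]
  exact mul_ne_zero (pow_ne_zero _ (X_sub_C_ne_zero 1)) fun h =>
    (eval_one_rodriguesCofactor_pos hj).ne' (by rw [h, eval_zero])

theorem le_card_roots_iterate_derivative_rodrigues {n j : ℕ} (hj : j ≤ n) :
    j ≤ #{x ∈ (derivative^[j] (rodrigues n)).roots.toFinset | x ∈ Set.Ioo 0 1} := by
  induction j with
  | zero => exact Nat.zero_le _
  | succ j ih =>
    obtain ⟨h0, h1⟩ := eval_iterate_derivative_rodrigues (n := n) (j := j) (by omega)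
    have hne := iterate_derivative_rodrigues_ne_zero hj
    rw [Function.iterate_succ_apply'] at hne ⊢
    exact (ih (by omega)).trans_lt
      (card_roots_Ioo_lt_card_roots_derivative_Ioo hne zero_lt_one h0 h1)

structure IsRadauNodes (n : ℕ) (S : Finset ℝ) : Prop where
  card_eq : #S = n
  mem_Ioo : ∀ t ∈ S, t ∈ Set.Ioo 0 1
  exists_eq_C_mul_nodal : ∃ c ≠ 0, rodriguesCofactor n n = C c * Lagrange.nodal S id

theorem exists_isRadauNodes (n : ℕ) : ∃ S, IsRadauNodes n S := by
  set S := {x ∈ (derivative^[n] (rodrigues n)).roots.toFinset | x ∈ Set.Ioo 0 1}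
  have hne := iterate_derivative_rodrigues_ne_zero (le_refl n)
  have hroots : ∀ t ∈ S, (rodriguesCofactor n n).eval t = 0 ∧ t ∈ Set.Ioo 0 1 := by
    intro t ht
    simp only [S, mem_filter, Multiset.mem_toFinset, mem_roots hne, IsRoot] at ht
    rw [iterate_derivative_rodrigues (by omega), eval_mul] at ht
    refine ⟨(mul_eq_zero.mp ht.1).resolve_left ?_, ht.2⟩
    simpa [sub_eq_zero] using ht.2.2.ne
  have hR : rodriguesCofactor n n ≠ 0 := fun h => hne (by
    rw [iterate_derivative_rodrigues (by omega), h, mul_zero])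
  have hcard : #S = n := le_antisymm
    ((card_le_degree_of_subset_roots fun t ht => (mem_roots hR).mpr (hroots t ht).1).trans
      (natDegree_rodriguesCofactor_le n n))
    (le_card_roots_iterate_derivative_rodrigues le_rfl)
  exact ⟨S, hcard, fun t ht => (hroots t ht).2, _, leadingCoeff_ne_zero.mpr hR,
    eq_C_leadingCoeff_mul_nodal (fun t ht => (hroots t ht).1)
      (hcard ▸ natDegree_rodriguesCofactor_le n n)⟩

namespace IsRadauNodes

variable {n : ℕ} {S : Finset ℝ}

theorem one_notMem (hS : IsRadauNodes n S) : 1 ∉ S := fun h => (hS.mem_Ioo 1 h).2.false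

theorem mem_Icc (hS : IsRadauNodes n S) {t : ℝ} (ht : t ∈ insert 1 S) : t ∈ Set.Icc (0 : ℝ) 1 := by
  rcases mem_insert.mp ht with rfl | ht
  exacts [⟨zero_le_one, le_rfl⟩, Set.Ioo_subset_Icc_self (hS.mem_Ioo t ht)]

theorem card_insert (hS : IsRadauNodes n S) : #(insert 1 S) = n + 1 := by
  rw [card_insert_of_notMem hS.one_notMem, hS.card_eq]

theorem nodal_insert (hS : IsRadauNodes n S) :
    Lagrange.nodal (insert 1 S) id = (X - 1) * Lagrange.nodal S id := by
  rw [Lagrange.nodal_insert_eq_nodal hS.one_notMem, id, map_one]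

theorem isExactUpTo (hS : IsRadauNodes n S) : IsExactUpTo (insert 1 S) (2 * n) := by
  obtain ⟨c, hc, hR⟩ := hS.exists_eq_C_mul_nodal
  have h := isExactUpTo_of_orthogonal (insert_nonempty 1 S) (k := n) fun r hr => by
    have := integral01_iterate_derivative_rodrigues_mul hr
    rw [iterate_derivative_rodrigues (by omega), hR, Nat.add_sub_cancel_left, pow_one,
      show (X - 1) * (C c * Lagrange.nodal S id) * r = C c * ((X - 1) * Lagrange.nodal S id * r)
        by ring, integral01_C_mul] at this
    rw [hS.nodal_insert]
    exact (mul_eq_zero.mp this).resolve_left hc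
  rwa [hS.card_insert, show n + 1 + n - 1 = 2 * n by omega] at h

theorem weight_pos (hS : IsRadauNodes n S) {t : ℝ} (ht : t ∈ insert 1 S) :
    0 < weight (insert 1 S) t :=
  GaussRadau.weight_pos (by rw [hS.card_insert, Nat.add_sub_cancel]; exact hS.isExactUpTo) ht
    (hS.mem_Icc ht)

theorem weight_one (hS : IsRadauNodes n S) : weight (insert 1 S) 1 = 1 / (n + 1) ^ 2 := by
  obtain ⟨c, hc, hR⟩ := hS.exists_eq_C_mul_nodal
  have hvanish : ∀ t ∈ S, (rodriguesCofactor n n).eval t = 0 := fun t ht => by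
    simp [hR, Lagrange.eval_nodal, prod_eq_zero ht]
  have h := hS.isExactUpTo _ ((natDegree_rodriguesCofactor_le n n).trans (by omega))
  rw [sum_insert hS.one_notMem, sum_eq_zero fun t ht => by rw [hvanish t ht, mul_zero],
    add_zero] at h
  rw [← integral01_div_eval_one_rodriguesCofactor, h,
    mul_div_cancel_right₀ _ (eval_one_rodriguesCofactor_pos le_rfl).ne']

theorem log_sub_sum_eq_integral_errorKernel (hS : IsRadauNodes n S) {x : ℝ} (hx : 0 < x)
    (hx1 : x ≠ 1) :
    Real.log x - ∑ t ∈ insert 1 S, weight (insert 1 S) t * ft t x =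
      ∫ s in (0 : ℝ)..1, errorKernel ((X - 1) * Lagrange.nodal S id ^ 2) (1 - x)⁻¹ s := by
  have ha := inv_one_sub_notMem_Icc hx hx1
  simp_rw [← integral_ft_eq_log hx, ft_eq_inv_sub hx1]
  refine integral_inv_sub_sub_sum_weight hS.isExactUpTo ?_ (fun t ht => ?_) ha ?_
  · refine natDegree_mul_le.trans ?_
    rw [natDegree_pow, Lagrange.natDegree_nodal, hS.card_eq]
    have : (X - 1 : ℝ[X]).natDegree = 1 := by simpa using natDegree_X_sub_C (1 : ℝ)
    omega
  · rcases mem_insert.mp ht with rfl | ht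
    · simp
    · simp [Lagrange.eval_nodal, prod_eq_zero ht]
  · simp only [eval_mul, eval_pow, eval_sub, eval_X, eval_one]
    refine mul_ne_zero (sub_ne_zero.mpr fun h => ha (by rw [h]; exact ⟨zero_le_one, le_rfl⟩))
      (pow_ne_zero _ (Lagrange.eval_nodal_not_at_node fun t ht h => ha ?_))
    exact h ▸ Set.Ioo_subset_Icc_self (hS.mem_Ioo t ht)

theorem log_sub_sum_nonneg (hS : IsRadauNodes n S) {x : ℝ} (hx : 0 < x) :
    0 ≤ Real.log x - ∑ t ∈ insert 1 S, weight (insert 1 S) t * ft t x := by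
  rcases eq_or_ne x 1 with rfl | hx1
  · simp [ft]
  rw [hS.log_sub_sum_eq_integral_errorKernel hx hx1]
  exact intervalIntegral.integral_nonneg zero_le_one fun s hs =>
    errorKernel_nonneg _ (inv_one_sub_notMem_Icc hx hx1) hs

theorem abs_log_sub_sum_le (hS : IsRadauNodes n S) {x : ℝ} (hx : 0 < x) (hδ : |x - 1| < 1 / 2) :
    |Real.log x - ∑ t ∈ insert 1 S, weight (insert 1 S) t * ft t x| ≤
      4 ^ (n + 1) * |x - 1| ^ (2 * (n + 1)) := by
  rcases eq_or_ne x 1 with rfl | hx1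
  · simp [ft]
  rw [hS.log_sub_sum_eq_integral_errorKernel hx hx1]
  have hbound : ∀ s ∈ Set.uIoc (0 : ℝ) 1,
      ‖errorKernel ((X - 1) * Lagrange.nodal S id ^ 2) (1 - x)⁻¹ s‖ ≤
        (2 * |x - 1|) ^ (2 * #S + 2) := fun s hs =>
    abs_errorKernel_le (fun t ht => Set.Ioo_subset_Icc_self (hS.mem_Ioo t ht))
      (fun t ht => one_le_two_mul_abs_mul_abs_sub hδ hx1 ht)
      (Set.Ioc_subset_Icc_self (by simpa using hs))
  refine (intervalIntegral.norm_integral_le_of_norm_le_const hbound).trans_eq ?_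
  rw [hS.card_eq, sub_zero, abs_one, mul_one, mul_pow, show 2 * n + 2 = 2 * (n + 1) by ring,
    pow_mul, show (2 : ℝ) ^ 2 = 4 by norm_num]

end IsRadauNodes

end GaussRadau

/-- Existence of the Gauss–Radau quadrature data for the logarithm with one node fixed at the
endpoint `t_m = 1`: for every positive integer `m` there exist nodes
`t_1, …, t_{m-1} ∈ (0,1)`, `t_m = 1` and weights `w_1, …, w_m > 0` with `w_m = 1/m²` such that
(i) `ln x - r_m(x) ≥ 0` for all `x > 0`, and (ii) `|ln x - r_m(x)| ≤ C|x-1|^{2m}` near `x = 1`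
for some constants `C, δ > 0`, where `r_m(x) = ∑_i w_i f_{t_i}(x)`.
(The nodes are indexed by `Fin m`; the last node/weight is the one with index `m - 1`.) -/
theorem gauss_radau_quadrature_exists (m : ℕ) (hm : 1 ≤ m) :
    ∃ t w : Fin m → ℝ,
      (∀ i : Fin m, (i : ℕ) < m - 1 → t i ∈ Set.Ioo (0 : ℝ) 1) ∧
      (∀ i : Fin m, (i : ℕ) = m - 1 → t i = 1) ∧
      (∀ i, 0 < w i) ∧
      (∀ i : Fin m, (i : ℕ) = m - 1 → w i = 1 / (m : ℝ) ^ 2) ∧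
      (∀ x : ℝ, 0 < x → 0 ≤ Real.log x - ∑ i, w i * ft (t i) x) ∧
      (∃ C δ : ℝ, 0 < C ∧ 0 < δ ∧
        ∀ x : ℝ, 0 < x → |x - 1| < δ →
          |Real.log x - ∑ i, w i * ft (t i) x| ≤ C * |x - 1| ^ (2 * m)) := by
  obtain ⟨n, rfl⟩ : ∃ n, m = n + 1 := ⟨m - 1, by omega⟩
  obtain ⟨S, hS⟩ := GaussRadau.exists_isRadauNodes n
  have hlt : ∀ t ∈ S, t < 1 := fun t ht => (hS.mem_Ioo t ht).2
  set N := insert 1 S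
  set e := N.orderEmbOfFin hS.card_insert
  have hsum : ∀ x, ∑ i, GaussRadau.weight N (e i) * ft (e i) x =
      ∑ t ∈ N, GaussRadau.weight N t * ft t x := fun x => by
    rw [← map_orderEmbOfFin_univ N hS.card_insert, sum_map]
    rfl
  refine ⟨e, fun i => GaussRadau.weight N (e i),
    fun i hi => hS.mem_Ioo _ (orderEmbOfFin_insert_mem_of_val_lt hlt _ (by omega)),
    fun i hi => orderEmbOfFin_insert_of_val_eq hlt _ (by omega),
    fun i => hS.weight_pos (orderEmbOfFin_mem _ _ i), fun i hi => ?_,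
    fun x hx => hsum x ▸ hS.log_sub_sum_nonneg hx,
    4 ^ (n + 1), 1 / 2, by positivity, by norm_num,
    fun x hx hδ => hsum x ▸ hS.abs_log_sub_sum_le hx hδ⟩
  change GaussRadau.weight N (e i) = _
  rw [orderEmbOfFin_insert_of_val_eq hlt _ (by omega), hS.weight_one]
  push_cast
  rfl
end

section
/- Let m ≥ 1 be an integer, let t_1, …, t_{m−1} ∈ (0,1), t_m = 1, and let w_1, …, w_m > 0 with w_m = 1/m². Set r_m(x) = Σ_{i=1}^m w_i f_{t_i}(x) for x > 0, and suppose that the function x ↦ (ln x − r_m(x))/(x−1)^{2m} is bounded on some punctured neighborhood of x = 1 intersected with (0,∞). Then for all x > 0 one has r_m(x) + r_m(1/x) ≥ −(1/m²)·(x + 1/x − 2). -/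
open Polynomial Filter Asymptotics Topology Finset

theorem Polynomial.X_sub_C_pow_dvd_of_isBigO {𝕜 : Type*} [NontriviallyNormedField 𝕜]
    {a : 𝕜} {n : ℕ} {P : 𝕜[X]} (h : (fun x => P.eval x) =O[𝓝[≠] a] fun x => (x - a) ^ n) :
    (X - C a) ^ n ∣ P := by
  induction n generalizing P with
  | zero => exact one_dvd P
  | succ n ih =>
    have hroot : P.IsRoot a := by
      have hsmall : Tendsto (fun x => (x - a) ^ (n + 1)) (𝓝[≠] a) (𝓝 0) := by
        have : Tendsto (fun x => (x - a) ^ (n + 1)) (𝓝 a) (𝓝 ((a - a) ^ (n + 1))) :=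
          ((continuous_id.sub continuous_const).pow _).tendsto a
        simpa using this.mono_left nhdsWithin_le_nhds
      exact tendsto_nhds_unique
        ((P.continuous.tendsto a).mono_left nhdsWithin_le_nhds) (h.trans_tendsto hsmall)
    set Q := P /ₘ (X - C a)
    have hPQ : (X - C a) * Q = P := mul_divByMonic_eq_iff_isRoot.mpr hroot
    have hne : ∀ᶠ x in 𝓝[≠] a, x - a ≠ 0 :=
      eventually_nhdsWithin_of_forall fun x hx => sub_ne_zero.mpr hx
    have hQ : (fun x => Q.eval x) =O[𝓝[≠] a] fun x => (x - a) ^ n := by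
      refine ((isBigO_refl (fun x => (x - a)⁻¹) _).mul h).congr' ?_ ?_ <;>
        filter_upwards [hne] with x hx
      · rw [← hPQ, eval_mul, eval_sub, eval_X, eval_C, inv_mul_cancel_left₀ hx]
      · rw [pow_succ', inv_mul_cancel_left₀ hx]
    rw [← hPQ, pow_succ']
    exact mul_dvd_mul_left _ (ih hQ)

noncomputable def pairDenom (a : ℝ) : ℝ[X] := C a * (X - C 1) ^ 2 + X

@[simp]
theorem eval_pairDenom (a x : ℝ) : (pairDenom a).eval x = a * (x - 1) ^ 2 + x := by
  simp [pairDenom]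

theorem natDegree_pairDenom_le (a : ℝ) : (pairDenom a).natDegree ≤ 2 := by
  unfold pairDenom; compute_degree

theorem eval_pairDenom_pos {a x : ℝ} (ha : 0 ≤ a) (hx : 0 < x) : 0 < (pairDenom a).eval x := by
  rw [eval_pairDenom]; positivity

section
variable {ι : Type*} (a c : ι → ℝ)

theorem natDegree_prod_pairDenom_le (s : Finset ι) :
    (∏ i ∈ s, pairDenom (a i)).natDegree ≤ 2 * #s := by
  refine (natDegree_prod_le _ _).trans ?_
  refine (sum_le_card_nsmul _ _ 2 fun j _ => natDegree_pairDenom_le _).trans ?_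
  rw [smul_eq_mul, mul_comm]

theorem natDegree_prod_pairDenom_sub_lt {s : Finset ι} (hs : s.Nonempty) :
    (∏ i ∈ s, pairDenom (a i) - ∏ i ∈ s, C (a i) * (X - C 1) ^ 2).natDegree < 2 * #s := by
  induction hs using Finset.Nonempty.cons_induction with
  | singleton i => simp [pairDenom]
  | cons i s hi hs ih =>
    set Q := ∏ j ∈ s, pairDenom (a j)
    set R := ∏ j ∈ s, C (a j) * (X - C 1) ^ 2
    have hQ : Q.natDegree ≤ 2 * #s := natDegree_prod_pairDenom_le a s
    have hF : (C (a i) * (X - C 1) ^ 2 : ℝ[X]).natDegree ≤ 2 := by compute_degree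
    have hsplit : pairDenom (a i) * Q - C (a i) * (X - C 1) ^ 2 * R =
        C (a i) * (X - C 1) ^ 2 * (Q - R) + X * Q := by
      rw [pairDenom]; ring
    rw [prod_cons, prod_cons, card_cons, hsplit]
    refine (natDegree_add_le _ _).trans_lt (max_lt ?_ ?_)
    · exact natDegree_mul_le.trans_lt (by omega)
    · exact natDegree_mul_le.trans_lt (by rw [natDegree_X]; omega)

variable [DecidableEq ι]

noncomputable def pairNumer (s : Finset ι) : ℝ[X] :=
  ∑ i ∈ s, C (c i) * ∏ j ∈ s.erase i, pairDenom (a j)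

theorem eval_pairNumer {s : Finset ι} {x : ℝ} (hx : ∀ i ∈ s, (pairDenom (a i)).eval x ≠ 0) :
    (pairNumer a c s).eval x =
      (∏ i ∈ s, (pairDenom (a i)).eval x) * ∑ i ∈ s, c i / (pairDenom (a i)).eval x := by
  rw [pairNumer, eval_finsetSum, mul_sum]
  refine sum_congr rfl fun i hi => ?_
  rw [eval_mul, eval_C, eval_prod, ← mul_prod_erase s _ hi]
  rw [mul_right_comm, mul_div_cancel₀ _ (hx i hi), mul_comm]

theorem natDegree_pairNumer_le (s : Finset ι) : (pairNumer a c s).natDegree ≤ 2 * (#s - 1) := by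
  refine natDegree_sum_le_of_forall_le _ _ fun i hi => (natDegree_C_mul_le _ _).trans ?_
  simpa [card_erase_of_mem hi] using natDegree_prod_pairDenom_le a (s.erase i)

theorem X_mul_pairNumer_eq_of_isBigO {s : Finset ι} {μ : ℝ}
    (h : (fun x => (x - 1) ^ 2 * (∑ i ∈ s, c i / (pairDenom (a i)).eval x - μ / x)) =O[𝓝[≠] 1]
      fun x => (x - 1) ^ (2 * #s + 2)) :
    X * pairNumer a c s =
      C μ * (∏ i ∈ s, pairDenom (a i) - ∏ i ∈ s, C (a i) * (X - C 1) ^ 2) := by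
  rcases s.eq_empty_or_nonempty with rfl | hs
  · simp [pairNumer]
  set P := X * pairNumer a c s -
    C μ * (∏ i ∈ s, pairDenom (a i) - ∏ i ∈ s, C (a i) * (X - C 1) ^ 2)
  suffices P = 0 from sub_eq_zero.mp this
  have hdvd : (X - C 1) ^ (2 * #s + 2) ∣ (X - C 1) ^ 2 * P := by
    refine X_sub_C_pow_dvd_of_isBigO ?_
    have hQ : (fun x => x * ∏ i ∈ s, (pairDenom (a i)).eval x) =O[𝓝[≠] 1] fun _ => (1 : ℝ) :=
      ((continuous_id.mul (continuous_finsetProd s fun i _ => (pairDenom (a i)).continuous))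
        |>.tendsto 1 |>.mono_left nhdsWithin_le_nhds).isBigO_one ℝ
    -- (x - 1)² P(x) = x ∏ᵢ D_{aᵢ}(x) · (the function in h) + μ ∏ᵢ aᵢ · (x - 1)^(2 #s + 2)
    refine ((hQ.mul h).add ((isBigO_refl _ _).const_mul_left (μ * ∏ i ∈ s, a i))).congr' ?_ ?_
    · have hne : ∀ᶠ x in 𝓝[≠] (1 : ℝ), x ≠ 0 ∧ ∀ i ∈ s, (pairDenom (a i)).eval x ≠ 0 := by
        refine nhdsWithin_le_nhds ((continuous_id.continuousAt.eventually_ne one_ne_zero).and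
          ((s.eventually_all).mpr fun i _ => ?_))
        exact (pairDenom (a i)).continuous.continuousAt.eventually_ne (by simp)
      filter_upwards [hne] with x ⟨hx, hD⟩
      simp only [P, eval_mul, eval_sub, eval_X, eval_C, eval_pow, eval_pairNumer a c hD, eval_prod,
        prod_mul_distrib, prod_const, ← pow_mul]
      field_simp
      ring
    · simp
  rw [pow_add, mul_comm] at hdvd
  refine eq_zero_of_dvd_of_natDegree_lt
    ((mul_dvd_mul_iff_left (pow_ne_zero 2 (X_sub_C_ne_zero 1))).mp hdvd) ?_
  have hS := natDegree_pairNumer_le a c s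
  have hQR := natDegree_prod_pairDenom_sub_lt a hs
  have hs1 := hs.card_pos
  rw [natDegree_pow, natDegree_X_sub_C, mul_one]
  refine (natDegree_sub_le _ _).trans_lt (max_lt ?_ ((natDegree_C_mul_le _ _).trans_lt hQR))
  exact natDegree_mul_le.trans_lt (by rw [natDegree_X]; omega)

theorem sum_div_pairDenom_nonneg_of_isBigO {s : Finset ι} (ha : ∀ i ∈ s, 0 ≤ a i) {μ : ℝ}
    (hμ : 0 ≤ μ)
    (h : (fun x => (x - 1) ^ 2 * (∑ i ∈ s, c i / (pairDenom (a i)).eval x - μ / x)) =O[𝓝[≠] 1]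
      fun x => (x - 1) ^ (2 * #s + 2))
    {x : ℝ} (hx : 0 < x) : 0 ≤ ∑ i ∈ s, c i / (pairDenom (a i)).eval x := by
  have hD : ∀ i ∈ s, 0 < (pairDenom (a i)).eval x := fun i hi => eval_pairDenom_pos (ha i hi) hx
  have hid := congrArg (eval x) (X_mul_pairNumer_eq_of_isBigO a c h)
  simp only [eval_mul, eval_X, eval_pairNumer a c fun i hi => (hD i hi).ne', eval_C, eval_sub,
    eval_pow, eval_prod] at hid
  have hR : ∏ i ∈ s, a i * (x - 1) ^ 2 ≤ ∏ i ∈ s, (pairDenom (a i)).eval x :=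
    prod_le_prod (fun i hi => mul_nonneg (ha i hi) (sq_nonneg _))
      fun i _ => by rw [eval_pairDenom]; linarith
  refine nonneg_of_mul_nonneg_right ?_ (mul_pos hx (prod_pos hD))
  rw [mul_assoc, hid]
  exact mul_nonneg hμ (sub_nonneg.mpr hR)
end

theorem ft_add_ft_inv {t x : ℝ} (ht : t ∈ Set.Icc 0 1) (hx : 0 < x) :
    ft t x + ft t x⁻¹ = (x - 1) ^ 2 * ((1 - 2 * t) / (pairDenom (t * (1 - t))).eval x) := by
  obtain ⟨ht0, ht1⟩ := ht
  have hA : 0 < t * (x - 1) + 1 := by nlinarith [mul_nonneg ht0 hx.le]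
  have hB : 0 < (1 - t) * (x - 1) + 1 := by nlinarith [mul_nonneg (sub_nonneg.2 ht1) hx.le]
  have hinv : ft t x⁻¹ = (1 - x) / ((1 - t) * (x - 1) + 1) := by
    have hden : t * (x⁻¹ - 1) + 1 = ((1 - t) * (x - 1) + 1) / x := by field_simp; ring
    rw [ft, hden, div_div_eq_mul_div]
    field_simp
  have hD : t * (1 - t) * (x - 1) ^ 2 + x = (t * (x - 1) + 1) * ((1 - t) * (x - 1) + 1) := by ring
  rw [eval_pairDenom, hD, hinv, ft, div_add_div _ _ hA.ne' hB.ne', mul_div_assoc']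
  congr 1
  ring

theorem sum_ft_add_sum_ft_inv {ι : Type*} (s : Finset ι) (t w : ι → ℝ)
    (ht : ∀ i ∈ s, t i ∈ Set.Icc 0 1) {x : ℝ} (hx : 0 < x) :
    ∑ i ∈ s, w i * ft (t i) x + ∑ i ∈ s, w i * ft (t i) x⁻¹ =
      (x - 1) ^ 2 * ∑ i ∈ s, w i * (1 - 2 * t i) / (pairDenom (t i * (1 - t i))).eval x := by
  rw [← sum_add_distrib, mul_sum]
  refine sum_congr rfl fun i hi => ?_
  rw [← mul_add, ft_add_ft_inv (ht i hi) hx]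
  ring

theorem sum_ft_add_sum_ft_inv_eq_sub {ι : Type*} [Fintype ι] [DecidableEq ι] (t w : ι → ℝ)
    {i₀ : ι} (ht : ∀ i, t i ∈ Set.Icc 0 1) (ht₀ : t i₀ = 1) {x : ℝ} (hx : 0 < x) :
    ∑ i, w i * ft (t i) x + ∑ i, w i * ft (t i) x⁻¹ = (x - 1) ^ 2 *
      (∑ i ∈ univ.erase i₀, w i * (1 - 2 * t i) / (pairDenom (t i * (1 - t i))).eval x
        - w i₀ / x) := by
  rw [sum_ft_add_sum_ft_inv _ t w (fun i _ => ht i) hx, ← add_sum_erase _ _ (mem_univ i₀), ht₀,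
    eval_pairDenom]
  ring

theorem isBigO_nhdsNE_one_of_abs_div_pow_le {f : ℝ → ℝ} {n : ℕ} {M δ : ℝ} (hδ : 0 < δ)
    (h : ∀ x, 0 < x → x ≠ 1 → |x - 1| < δ → |f x / (x - 1) ^ n| ≤ M) :
    f =O[𝓝[≠] 1] fun x => (x - 1) ^ n := by
  refine IsBigO.of_bound M ?_
  have hnear : ∀ᶠ x in 𝓝 (1 : ℝ), 0 < x ∧ |x - 1| < δ :=
    (lt_mem_nhds one_pos).and (eventually_abs_sub_lt 1 hδ)
  filter_upwards [self_mem_nhdsWithin, nhdsWithin_le_nhds hnear] with x hx1 ⟨hx0, hxδ⟩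
  have hpos : 0 < |(x - 1) ^ n| := abs_pos.mpr (pow_ne_zero n (sub_ne_zero.mpr hx1))
  simpa only [Real.norm_eq_abs, abs_div, div_le_iff₀ hpos] using h x hx0 hx1 hxδ

theorem isBigO_add_comp_inv {f : ℝ → ℝ} {n : ℕ} (h : f =O[𝓝[≠] 1] fun x => (x - 1) ^ n) :
    (fun x => f x + f x⁻¹) =O[𝓝[≠] 1] fun x => (x - 1) ^ n := by
  have hinv : Tendsto (·⁻¹) (𝓝[≠] (1 : ℝ)) (𝓝[≠] 1) := by
    refine tendsto_nhdsWithin_of_tendsto_nhds_of_eventually_within _ ?_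
      (eventually_nhdsWithin_of_forall fun x hx => inv_ne_one.mpr hx)
    have := (continuousAt_inv₀ (one_ne_zero : (1 : ℝ) ≠ 0)).tendsto
    simpa using this.mono_left nhdsWithin_le_nhds
  have hlin : (fun x : ℝ => x⁻¹ - 1) =O[𝓝[≠] 1] fun x => x - 1 := by
    have hbdd : (fun x : ℝ => -x⁻¹) =O[𝓝[≠] 1] fun _ => (1 : ℝ) :=
      (((continuousAt_inv₀ one_ne_zero).neg).tendsto.mono_left nhdsWithin_le_nhds).isBigO_one ℝ
    refine (hbdd.mul (isBigO_refl (fun x : ℝ => x - 1) _)).congr' ?_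
      (Eventually.of_forall fun x => one_mul _)
    filter_upwards [nhdsWithin_le_nhds (eventually_ne_nhds one_ne_zero)] with x hx
    field_simp
    ring
  exact h.add ((h.comp_tendsto hinv).trans (hlin.pow n))

theorem rm_self_plus_rm_inv_lower_bound_general (m : ℕ) (hm : 1 ≤ m) (t w : Fin m → ℝ)
    (ht : ∀ i : Fin m, (i : ℕ) < m - 1 → t i ∈ Set.Ioo (0 : ℝ) 1)
    (htm : ∀ i : Fin m, (i : ℕ) = m - 1 → t i = 1)
    (hwm : ∀ i : Fin m, (i : ℕ) = m - 1 → w i = 1 / (m : ℝ) ^ 2)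
    (hbound : ∃ M δ : ℝ, 0 < δ ∧
      ∀ x : ℝ, 0 < x → x ≠ 1 → |x - 1| < δ →
        |(Real.log x - ∑ i, w i * ft (t i) x) / (x - 1) ^ (2 * m)| ≤ M) :
    ∀ x : ℝ, 0 < x →
      (∑ i, w i * ft (t i) x) + (∑ i, w i * ft (t i) (1 / x)) ≥
        -(1 / (m : ℝ) ^ 2) * (x + 1 / x - 2) := by
  intro x hx
  set i₀ : Fin m := ⟨m - 1, by omega⟩
  set μ : ℝ := 1 / (m : ℝ) ^ 2
  set s := univ.erase i₀
  have htI : ∀ i, t i ∈ Set.Icc 0 1 := fun i => by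
    by_cases hi : (i : ℕ) = m - 1
    · simp [htm i hi]
    · exact Set.Ioo_subset_Icc_self (ht i (by omega))
  have hpair y (hy : 0 < y) := sum_ft_add_sum_ft_inv_eq_sub t w htI (htm i₀ rfl) hy
  rw [hwm i₀ rfl] at hpair
  obtain ⟨M, δ, hδ, hM⟩ := hbound
  have hO := (isBigO_add_comp_inv (isBigO_nhdsNE_one_of_abs_div_pow_le hδ hM)).neg_left
  have hcard : 2 * #s + 2 = 2 * m := by
    rw [card_erase_of_mem (mem_univ _), card_univ, Fintype.card_fin]; omega
  have hS : 0 ≤ ∑ i ∈ s, w i * (1 - 2 * t i) / (pairDenom (t i * (1 - t i))).eval x := by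
    refine sum_div_pairDenom_nonneg_of_isBigO _ _ (μ := μ)
      (fun i _ => mul_nonneg (htI i).1 (sub_nonneg.2 (htI i).2)) (by positivity) ?_ hx
    rw [hcard]
    refine hO.congr' ?_ EventuallyEq.rfl
    filter_upwards [nhdsWithin_le_nhds (lt_mem_nhds one_pos)] with y hy
    rw [← hpair y hy, Real.log_inv]
    ring
  have hμx : (x - 1) ^ 2 * (μ / x) = μ * (x + x⁻¹ - 2) := by field_simp; ring
  rw [one_div x, hpair x hx, mul_sub, hμx]
  linarith [mul_nonneg (sq_nonneg (x - 1)) hS]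

/-- If `t_1, …, t_{m-1} ∈ (0,1)`, `t_m = 1`, `w_1, …, w_m > 0` with `w_m = 1/m²`, and
`(ln x - r_m(x))/(x-1)^{2m}` is bounded on a punctured neighborhood of `x = 1` (intersected
with `(0,∞)`), then `r_m(x) + r_m(1/x) ≥ -(1/m²)(x + 1/x - 2)` for all `x > 0`,
where `r_m(x) = ∑_i w_i f_{t_i}(x)`. Nodes are indexed by `Fin m`, with the last node/weight
the one of index `m - 1`. -/
theorem rm_self_plus_rm_inv_lower_bound (m : ℕ) (hm : 1 ≤ m) (t w : Fin m → ℝ)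
    (ht : ∀ i : Fin m, (i : ℕ) < m - 1 → t i ∈ Set.Ioo (0 : ℝ) 1)
    (htm : ∀ i : Fin m, (i : ℕ) = m - 1 → t i = 1)
    (hw : ∀ i, 0 < w i)
    (hwm : ∀ i : Fin m, (i : ℕ) = m - 1 → w i = 1 / (m : ℝ) ^ 2)
    (hbound : ∃ M δ : ℝ, 0 < δ ∧
      ∀ x : ℝ, 0 < x → x ≠ 1 → |x - 1| < δ →
        |(Real.log x - ∑ i, w i * ft (t i) x) / (x - 1) ^ (2 * m)| ≤ M) :
    ∀ x : ℝ, 0 < x →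
      (∑ i, w i * ft (t i) x) + (∑ i, w i * ft (t i) (1 / x)) ≥
        -(1 / (m : ℝ) ^ 2) * (x + 1 / x - 2) :=
  rm_self_plus_rm_inv_lower_bound_general m hm t w ht htm hwm hbound
end

section
/- Let m ≥ 1 be an integer, let t_1, …, t_{m−1} ∈ (0,1), t_m = 1, and let w_1, …, w_m > 0 with w_m = 1/m². Set r_m(x) = Σ_{i=1}^m w_i f_{t_i}(x), and suppose that the function x ↦ (ln x − r_m(x))/(x−1)^{2m} is bounded on some punctured neighborhood of x = 1 intersected with (0,∞). Define G(x) = Π_{i=1}^{m−1} ((t_i/(1−t_i))·x + 1), Ĝ(x) = x^{m−1}·G(1/x), and c₀ = Π_{i=1}^{m−1} t_i/(1−t_i). Then for all x > 0 one has r_m(x) + r_m(1/x) = −(1/m²)·c₀·(x−1)^{2m} / (x·G(x)·Ĝ(x)). -/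
/-!
Since `f_t(x) + f_t(1/x) = (1 - 2t)(x - 1)² / ((tx + 1 - t)((1 - t)x + t))`, the symmetrised sum
`r_m(x) + r_m(1/x)` equals `P(x) / Q(x)` with `Q = ∏ᵢ (tᵢx + 1 - tᵢ)((1 - tᵢ)x + tᵢ)` and a
polynomial `P` of degree at most `2m`. As `ln x + ln (1/x) = 0`, the hypothesis makes
`r_m(x) + r_m(1/x) = O((x - 1)^{2m})` near `1`, hence `(X - 1)^{2m} ∣ P` and `P = c (X - 1)^{2m}`.
The node `t_m = 1` kills every contribution to the leading coefficient `c` but its own, and its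
factor of `Q` is just `x`.
-/

open Polynomial Finset Filter Asymptotics Topology

namespace Polynomial

theorem X_sub_C_pow_dvd_of_isBigO_s3 {𝕜 : Type*} [NontriviallyNormedField 𝕜] {P : 𝕜[X]} {a : 𝕜}
    {n : ℕ} (h : (fun x => P.eval x) =O[𝓝[≠] a] fun x => (x - a) ^ n) : (X - C a) ^ n ∣ P := by
  rcases eq_or_ne P 0 with rfl | hP
  · exact dvd_zero _
  rw [← le_rootMultiplicity_iff hP]
  by_contra! hk
  set k := P.rootMultiplicity a
  set R := P /ₘ (X - C a) ^ k
  have hPR : P = (X - C a) ^ k * R := (pow_mul_divByMonic_rootMultiplicity_eq P a).symm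
  have hne : ∀ᶠ x in 𝓝[≠] a, x - a ≠ 0 :=
    eventually_nhdsWithin_of_forall fun x hx => sub_ne_zero.mpr hx
  have hR : (fun x => R.eval x) =O[𝓝[≠] a] fun x => (x - a) ^ (n - k) := by
    refine (h.mul (isBigO_refl (fun x => ((x - a) ^ k)⁻¹) _)).congr' ?_ ?_
    · filter_upwards [hne] with x hx
      rw [hPR, eval_mul, eval_pow, eval_sub, eval_X, eval_C, mul_comm,
        inv_mul_cancel_left₀ (pow_ne_zero _ hx)]
    · filter_upwards [hne] with x hx
      rw [← pow_sub₀ _ hx hk.le]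
  have hlim : Tendsto (fun x => R.eval x) (𝓝[≠] a) (𝓝 0) := by
    refine hR.trans_tendsto (tendsto_nhdsWithin_of_tendsto_nhds ?_)
    have : Continuous fun x : 𝕜 => (x - a) ^ (n - k) := by fun_prop
    simpa [zero_pow (Nat.sub_ne_zero_of_lt hk)] using this.tendsto a
  exact eval_divByMonic_pow_rootMultiplicity_ne_zero a hP <|
    tendsto_nhds_unique (R.continuous.tendsto a |>.mono_left nhdsWithin_le_nhds) hlim

variable {R : Type*} [CommRing R]

theorem natDegree_C_mul_X_sub_C_sq_le (c a : R) : (C c * (X - C a) ^ 2).natDegree ≤ 2 :=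
  (natDegree_C_mul_le _ _).trans (natDegree_pow_le_of_le 2 (natDegree_X_sub_C_le a))

variable [Nontrivial R]

theorem eq_C_mul_X_sub_C_pow_of_dvd {P : R[X]} {a : R} {n : ℕ} (hdeg : P.natDegree ≤ n)
    (hdvd : (X - C a) ^ n ∣ P) : P = C (P.coeff n) * (X - C a) ^ n := by
  obtain ⟨Q, rfl⟩ := hdvd
  have hmonic : ((X - C a) ^ n).Monic := (monic_X_sub_C a).pow n
  have hnat : ((X - C a) ^ n).natDegree = n := by
    rw [(monic_X_sub_C a).natDegree_pow, natDegree_X_sub_C, mul_one]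
  rcases eq_or_ne Q 0 with rfl | hQ
  · simp
  rw [hmonic.natDegree_mul' hQ, hnat] at hdeg
  have hlead : ((X - C a) ^ n).coeff n = 1 := by
    simpa only [hnat] using hmonic.coeff_natDegree
  rw [eq_C_of_natDegree_eq_zero (by omega : Q.natDegree = 0), mul_comm, coeff_C_mul, hlead,
    mul_one]

theorem coeff_C_mul_X_sub_C_sq_two (c a : R) : (C c * (X - C a) ^ 2).coeff 2 = c := by
  have h : ((X - C a) ^ 2).coeff 2 = 1 := by
    simpa [(monic_X_sub_C a).natDegree_pow] using ((monic_X_sub_C a).pow 2).coeff_natDegree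
  rw [coeff_C_mul, h, mul_one]

end Polynomial

theorem isBigO_nhdsNE_of_abs_div_le {f g : ℝ → ℝ} {a : ℝ} (ha : 0 < a)
    (hg : ∀ x, x ≠ a → g x ≠ 0)
    (h : ∃ M δ : ℝ, 0 < δ ∧ ∀ x, 0 < x → x ≠ a → |x - a| < δ → |f x / g x| ≤ M) :
    f =O[𝓝[≠] a] g := by
  obtain ⟨M, δ, hδ, hM⟩ := h
  have hne : ∀ᶠ x in 𝓝[≠] a, x ≠ a := self_mem_nhdsWithin
  have hpos : ∀ᶠ x in 𝓝[≠] a, 0 < x := nhdsWithin_le_nhds (lt_mem_nhds ha)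
  have hnear : ∀ᶠ x in 𝓝[≠] a, |x - a| < δ :=
    nhdsWithin_le_nhds (Metric.ball_mem_nhds a hδ)
  rw [isBigO_iff_div_isBoundedUnder (hne.mono fun x hx hgx => absurd hgx (hg x hx))]
  exact ⟨M, eventually_map.mpr <| by
    filter_upwards [hne, hpos, hnear] with x hxa hx hxδ using hM x hx hxa hxδ⟩

theorem tendsto_one_div_nhdsNE_one : Tendsto (fun x : ℝ => 1 / x) (𝓝[≠] 1) (𝓝[≠] 1) := by
  refine tendsto_nhdsWithin_of_tendsto_nhds_of_eventually_within _ ?_ ?_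
  · simpa using (continuousAt_inv₀ (one_ne_zero (α := ℝ))).tendsto.mono_left nhdsWithin_le_nhds
  · exact eventually_nhdsWithin_of_forall fun x hx => by simpa using hx

theorem isBigO_one_div_sub_one_pow (n : ℕ) :
    (fun x : ℝ => (1 / x - 1) ^ n) =O[𝓝 1] fun x => (x - 1) ^ n := by
  have hinv : (fun x : ℝ => -1 / x) =O[𝓝 1] fun _ => (1 : ℝ) :=
    ((continuousAt_const.div continuousAt_id one_ne_zero).tendsto).isBigO_one ℝ
  refine ((isBigO_refl (fun x : ℝ => x - 1) _).mul hinv).pow n |>.congr' ?_ ?_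
  · filter_upwards [lt_mem_nhds one_pos] with x hx
    field_simp
    ring
  · simp

theorem Asymptotics.IsBigO.add_comp_one_div {f : ℝ → ℝ} {n : ℕ}
    (hf : f =O[𝓝[≠] 1] fun x => (x - 1) ^ n) :
    (fun x => f x + f (1 / x)) =O[𝓝[≠] 1] fun x => (x - 1) ^ n :=
  hf.add <| (hf.comp_tendsto tendsto_one_div_nhdsNE_one).trans
    ((isBigO_one_div_sub_one_pow n).mono nhdsWithin_le_nhds)

theorem mul_add_one_sub_pos {t x : ℝ} (ht : t ∈ Set.Icc 0 1) (hx : 0 < x) :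
    0 < t * x + (1 - t) := by
  obtain ⟨ht0, ht1⟩ := ht
  rcases le_total x 1 with h | h <;> nlinarith

noncomputable def ftSymmDenom (t : ℝ) : ℝ[X] := (C t * X + C (1 - t)) * (C (1 - t) * X + C t)

@[simp]
theorem eval_ftSymmDenom (t x : ℝ) :
    (ftSymmDenom t).eval x = (t * x + (1 - t)) * ((1 - t) * x + t) := by
  simp [ftSymmDenom]

theorem natDegree_ftSymmDenom_le (t : ℝ) : (ftSymmDenom t).natDegree ≤ 2 :=
  natDegree_mul_le_of_le natDegree_linear_le natDegree_linear_le

theorem coeff_ftSymmDenom_two (t : ℝ) : (ftSymmDenom t).coeff 2 = t * (1 - t) := by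
  rw [ftSymmDenom, coeff_mul_add_eq_of_natDegree_le (df := 1) (dg := 1) natDegree_linear_le
    natDegree_linear_le]
  simp [coeff_one]

theorem natDegree_prod_ftSymmDenom_le {ι : Type*} (t : ι → ℝ) (s : Finset ι) :
    (∏ j ∈ s, ftSymmDenom (t j)).natDegree ≤ #s * 2 :=
  (natDegree_prod_le _ _).trans <| by
    simpa using sum_le_card_nsmul s _ 2 fun j _ => natDegree_ftSymmDenom_le (t j)

theorem ftSymmDenom_eval_pos {t x : ℝ} (ht : t ∈ Set.Icc 0 1) (hx : 0 < x) :
    0 < (ftSymmDenom t).eval x := by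
  have ht' : 1 - t ∈ Set.Icc 0 1 := ⟨by linarith [ht.2], by linarith [ht.1]⟩
  rw [eval_ftSymmDenom]
  exact mul_pos (mul_add_one_sub_pos ht hx) (by linarith [mul_add_one_sub_pos ht' hx])

theorem ft_add_ft_one_div {t x : ℝ} (ht : t ∈ Set.Icc 0 1) (hx : 0 < x) :
    ft t x + ft t (1 / x) = (1 - 2 * t) * (x - 1) ^ 2 / (ftSymmDenom t).eval x := by
  have ht' : 1 - t ∈ Set.Icc 0 1 := ⟨by linarith [ht.2], by linarith [ht.1]⟩
  have hA := mul_add_one_sub_pos ht hx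
  have hB : 0 < (1 - t) * x + t := by linarith [mul_add_one_sub_pos ht' hx]
  have e1 : ft t x = (x - 1) / (t * x + (1 - t)) := by rw [ft]; ring
  have e2 : ft t (1 / x) = (1 - x) / ((1 - t) * x + t) := by
    rw [ft]; field_simp; ring
  rw [e1, e2, div_add_div _ _ hA.ne' hB.ne', eval_ftSymmDenom]
  congr 1
  ring

theorem prod_div_prod_mul_pow_mul_prod {ι : Type*} {s : Finset ι} {t : ι → ℝ}
    (ht : ∀ i ∈ s, t i ≠ 1) {x : ℝ} (hx : x ≠ 0) :
    (∏ i ∈ s, t i / (1 - t i)) /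
        ((∏ i ∈ s, (t i / (1 - t i) * x + 1)) *
          (x ^ #s * ∏ i ∈ s, (t i / (1 - t i) * (1 / x) + 1))) =
      ∏ i ∈ s, t i * (1 - t i) / (ftSymmDenom (t i)).eval x := by
  rw [← prod_const, ← prod_mul_distrib, ← prod_mul_distrib, ← prod_div_distrib]
  refine prod_congr rfl fun i hi => ?_
  have hu : 1 - t i ≠ 0 := sub_ne_zero.mpr (ht i hi).symm
  rw [eval_ftSymmDenom]
  field_simp
  ring

section

variable {ι : Type*} [Fintype ι] [DecidableEq ι]

noncomputable def ftSymmNumer (w t : ι → ℝ) : ℝ[X] :=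
  ∑ i, C (w i * (1 - 2 * t i)) * (X - C 1) ^ 2 * ∏ j ∈ univ.erase i, ftSymmDenom (t j)

theorem card_erase_mul_two_add_two (i : ι) : 2 + #(univ.erase i) * 2 = 2 * Fintype.card ι := by
  rw [card_erase_of_mem (mem_univ i), card_univ]
  have := Fintype.card_pos_iff.mpr ⟨i⟩
  omega

theorem natDegree_ftSymmNumer_le (w t : ι → ℝ) :
    (ftSymmNumer w t).natDegree ≤ 2 * Fintype.card ι := by
  refine natDegree_sum_le_of_forall_le _ _ fun i _ => ?_
  rw [← card_erase_mul_two_add_two i]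
  exact natDegree_mul_le_of_le (natDegree_C_mul_X_sub_C_sq_le _ _)
    (natDegree_prod_ftSymmDenom_le t _)

theorem coeff_ftSymmNumer (w t : ι → ℝ) :
    (ftSymmNumer w t).coeff (2 * Fintype.card ι) =
      ∑ i, w i * (1 - 2 * t i) * ∏ j ∈ univ.erase i, t j * (1 - t j) := by
  rw [ftSymmNumer, finsetSum_coeff]
  refine sum_congr rfl fun i _ => ?_
  rw [← card_erase_mul_two_add_two i, coeff_mul_add_eq_of_natDegree_le
    (natDegree_C_mul_X_sub_C_sq_le _ _) (natDegree_prod_ftSymmDenom_le t _),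
    coeff_prod_of_natDegree_le (h := fun j _ => natDegree_ftSymmDenom_le (t j))]
  simp only [coeff_C_mul_X_sub_C_sq_two, coeff_ftSymmDenom_two]

theorem coeff_ftSymmNumer_of_eq_one (w t : ι → ℝ) {k : ι} (hk : t k = 1) :
    (ftSymmNumer w t).coeff (2 * Fintype.card ι) =
      -w k * ∏ j ∈ univ.erase k, t j * (1 - t j) := by
  rw [coeff_ftSymmNumer, sum_eq_single k]
  · rw [hk]; ring
  · intro i _ hik
    rw [prod_eq_zero (mem_erase.mpr ⟨Ne.symm hik, mem_univ k⟩) (by rw [hk]; ring), mul_zero]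
  · exact fun h => absurd (mem_univ k) h

variable {w t : ι → ℝ}

theorem sum_ft_add_sum_ft_one_div_mul_prod_eval (ht : ∀ i, t i ∈ Set.Icc 0 1) {x : ℝ}
    (hx : 0 < x) :
    (∑ i, w i * ft (t i) x + ∑ i, w i * ft (t i) (1 / x)) * ∏ i, (ftSymmDenom (t i)).eval x =
      (ftSymmNumer w t).eval x := by
  rw [← sum_add_distrib, sum_mul, ftSymmNumer, eval_finsetSum]
  refine sum_congr rfl fun i _ => ?_
  rw [← mul_add, ft_add_ft_one_div (ht i) hx, ← mul_prod_erase _ _ (mem_univ i)]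
  simp only [eval_mul, eval_C, eval_pow, eval_sub, eval_X, eval_prod]
  have hD := (ftSymmDenom_eval_pos (ht i) hx).ne'
  field_simp

theorem isBigO_eval_ftSymmNumer (ht : ∀ i, t i ∈ Set.Icc 0 1) {n : ℕ}
    (h : (fun x => Real.log x - ∑ i, w i * ft (t i) x) =O[𝓝[≠] 1] fun x => (x - 1) ^ n) :
    (fun x => (ftSymmNumer w t).eval x) =O[𝓝[≠] 1] fun x => (x - 1) ^ n := by
  have hsum : (fun x => ∑ i, w i * ft (t i) x + ∑ i, w i * ft (t i) (1 / x)) =O[𝓝[≠] 1]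
      fun x => (x - 1) ^ n :=
    h.add_comp_one_div.neg_left.congr_left fun x => by
      rw [one_div, Real.log_inv]
      ring
  have hdenom : (fun x => ∏ i, (ftSymmDenom (t i)).eval x) =O[𝓝[≠] 1] fun _ => (1 : ℝ) :=
    Tendsto.isBigO_one ℝ <|
      (continuous_finsetProd _ fun i _ => (ftSymmDenom (t i)).continuous).tendsto 1
        |>.mono_left nhdsWithin_le_nhds
  refine (hsum.mul hdenom).congr' ?_ (by simp)
  filter_upwards [nhdsWithin_le_nhds (lt_mem_nhds one_pos)] with x hx
  exact sum_ft_add_sum_ft_one_div_mul_prod_eval ht hx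

theorem sum_ft_add_sum_ft_one_div_eq (ht : ∀ i, t i ∈ Set.Icc 0 1) {k : ι} (hk : t k = 1)
    (h : (fun x => Real.log x - ∑ i, w i * ft (t i) x) =O[𝓝[≠] 1]
      fun x => (x - 1) ^ (2 * Fintype.card ι))
    {x : ℝ} (hx : 0 < x) :
    ∑ i, w i * ft (t i) x + ∑ i, w i * ft (t i) (1 / x) =
      -w k * (x - 1) ^ (2 * Fintype.card ι) / x *
        ∏ i ∈ univ.erase k, t i * (1 - t i) / (ftSymmDenom (t i)).eval x := by
  have hnumer := eq_C_mul_X_sub_C_pow_of_dvd (natDegree_ftSymmNumer_le w t)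
    (X_sub_C_pow_dvd_of_isBigO_s3 (isBigO_eval_ftSymmNumer ht h))
  have hkey := sum_ft_add_sum_ft_one_div_mul_prod_eval (w := w) ht hx
  rw [hnumer, coeff_ftSymmNumer_of_eq_one w t hk, ← mul_prod_erase _ _ (mem_univ k), hk] at hkey
  simp only [eval_mul, eval_C, eval_pow, eval_sub, eval_X, eval_ftSymmDenom 1, sub_self,
    one_mul, zero_mul, add_zero, zero_add, mul_one] at hkey
  have hD : 0 < ∏ i ∈ univ.erase k, (ftSymmDenom (t i)).eval x :=
    prod_pos fun i _ => ftSymmDenom_eval_pos (ht i) hx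
  rw [← eq_div_iff (mul_pos hx hD).ne'] at hkey
  rw [hkey, prod_div_distrib]
  ring

end

theorem rm_self_plus_rm_inv_eq_general (m : ℕ) (hm : 1 ≤ m) (t w : Fin m → ℝ)
    (ht : ∀ i : Fin m, (i : ℕ) < m - 1 → t i ∈ Set.Ioo (0 : ℝ) 1)
    (htm : ∀ i : Fin m, (i : ℕ) = m - 1 → t i = 1)
    (hwm : ∀ i : Fin m, (i : ℕ) = m - 1 → w i = 1 / (m : ℝ) ^ 2)
    (hbound : ∃ M δ : ℝ, 0 < δ ∧
      ∀ x : ℝ, 0 < x → x ≠ 1 → |x - 1| < δ →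
        |(Real.log x - ∑ i, w i * ft (t i) x) / (x - 1) ^ (2 * m)| ≤ M) :
    ∀ x : ℝ, 0 < x →
      (∑ i, w i * ft (t i) x) + (∑ i, w i * ft (t i) (1 / x)) =
        -(1 / (m : ℝ) ^ 2) *
          ((∏ i ∈ Finset.univ.filter (fun i : Fin m => (i : ℕ) < m - 1), t i / (1 - t i)) *
            (x - 1) ^ (2 * m)) /
          (x * (∏ i ∈ Finset.univ.filter (fun i : Fin m => (i : ℕ) < m - 1),
                  (t i / (1 - t i) * x + 1)) *
            (x ^ (m - 1) *
              ∏ i ∈ Finset.univ.filter (fun i : Fin m => (i : ℕ) < m - 1),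
                (t i / (1 - t i) * (1 / x) + 1))) := by
  intro x hx
  set last : Fin m := ⟨m - 1, by omega⟩
  have hs : univ.filter (fun i : Fin m => (i : ℕ) < m - 1) = univ.erase last := by
    ext i
    simp only [mem_filter, mem_univ, true_and, mem_erase, ne_eq, Fin.ext_iff, and_true, last]
    omega
  have ht_mem : ∀ i, t i ∈ Set.Icc 0 1 := fun i =>
    (Nat.le_sub_one_of_lt i.isLt).lt_or_eq.elim (fun hi => Set.Ioo_subset_Icc_self (ht i hi))
      fun hi => by simp [htm i hi]
  have ht_ne_one : ∀ i ∈ univ.erase last, t i ≠ 1 := by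
    intro i hi
    rw [← hs, mem_filter] at hi
    exact (ht i hi.2).2.ne
  have hO := isBigO_nhdsNE_of_abs_div_le one_pos
    (fun x hx => pow_ne_zero _ (sub_ne_zero.mpr hx)) hbound
  rw [sum_ft_add_sum_ft_one_div_eq ht_mem (htm last rfl) (by rwa [Fintype.card_fin]) hx,
    hwm last rfl, Fintype.card_fin,
    ← prod_div_prod_mul_pow_mul_prod ht_ne_one hx.ne', hs,
    show m - 1 = #(univ.erase last) by simp]
  ring

/-- Under the Gauss–Radau hypotheses (`t_1, …, t_{m-1} ∈ (0,1)`, `t_m = 1`,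
`w_1, …, w_m > 0`, `w_m = 1/m²`, and boundedness of `(ln x - r_m(x))/(x-1)^{2m}` near `x = 1`),
one has the identity
`r_m(x) + r_m(1/x) = -(1/m²)·c₀·(x-1)^{2m} / (x·G(x)·Ĝ(x))` for all `x > 0`, where
`G(x) = ∏_{i<m-1} ((t_i/(1-t_i))x + 1)`, `Ĝ(x) = x^{m-1}·G(1/x)` and
`c₀ = ∏_{i<m-1} t_i/(1-t_i)`. Nodes are indexed by `Fin m`, with the last node/weight the one
of index `m - 1`. -/
theorem rm_self_plus_rm_inv_eq (m : ℕ) (hm : 1 ≤ m) (t w : Fin m → ℝ)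
    (ht : ∀ i : Fin m, (i : ℕ) < m - 1 → t i ∈ Set.Ioo (0 : ℝ) 1)
    (htm : ∀ i : Fin m, (i : ℕ) = m - 1 → t i = 1)
    (hw : ∀ i, 0 < w i)
    (hwm : ∀ i : Fin m, (i : ℕ) = m - 1 → w i = 1 / (m : ℝ) ^ 2)
    (hbound : ∃ M δ : ℝ, 0 < δ ∧
      ∀ x : ℝ, 0 < x → x ≠ 1 → |x - 1| < δ →
        |(Real.log x - ∑ i, w i * ft (t i) x) / (x - 1) ^ (2 * m)| ≤ M) :
    ∀ x : ℝ, 0 < x →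
      (∑ i, w i * ft (t i) x) + (∑ i, w i * ft (t i) (1 / x)) =
        -(1 / (m : ℝ) ^ 2) *
          ((∏ i ∈ Finset.univ.filter (fun i : Fin m => (i : ℕ) < m - 1), t i / (1 - t i)) *
            (x - 1) ^ (2 * m)) /
          (x * (∏ i ∈ Finset.univ.filter (fun i : Fin m => (i : ℕ) < m - 1),
                  (t i / (1 - t i) * x + 1)) *
            (x ^ (m - 1) *
              ∏ i ∈ Finset.univ.filter (fun i : Fin m => (i : ℕ) < m - 1),
                (t i / (1 - t i) * (1 / x) + 1))) :=
  rm_self_plus_rm_inv_eq_general m hm t w ht htm hwm hbound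
end

section
/- Let t ∈ [0,1], let n ≥ 1, and for an n×n positive definite Hermitian complex matrix M define f_t(M) = (M − I)·(t·M + (1−t)·I)⁻¹ (the matrix t·M + (1−t)·I is positive definite, hence invertible). Then f_t is operator concave on positive definite matrices: for any n×n positive definite Hermitian complex matrices A, B and any λ ∈ [0,1], the matrix f_t(λ·A + (1−λ)·B) − λ·f_t(A) − (1−λ)·f_t(B) is positive semidefinite. -/
/-!
For `t > 0` put `N(M) = t•M + (1-t)•1`, which is affine in `M` and positive definite when `M`
is. Since `t•(M - 1) = N(M) - 1`, we get `f_t(M) = t⁻¹•(1 - N(M)⁻¹)`, so concavity of `f_t`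
reduces to operator convexity of the inverse. The latter follows from Schur complements: the
block matrix `[X⁻¹, 1; 1, X]` is positive semidefinite, hence so is any convex combination of
two of them, and taking the Schur complement of the lower right block `λX + (1-λ)Y` gives
`λX⁻¹ + (1-λ)Y⁻¹ - (λX + (1-λ)Y)⁻¹ ≥ 0`. For `t = 0` the map `f_0(M) = M - 1` is affine.
-/

open scoped ComplexOrder

/-- The matrix version of `f_t`: for a positive definite Hermitian matrix `M`,
`f_t(M) = (M - I)·(t·M + (1-t)·I)⁻¹`. -/
noncomputable def ftMat {n : ℕ} (t : ℝ) (M : Matrix (Fin n) (Fin n) ℂ) :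
    Matrix (Fin n) (Fin n) ℂ :=
  (M - 1) * (t • M + (1 - t) • (1 : Matrix (Fin n) (Fin n) ℂ))⁻¹

namespace Matrix

variable {n 𝕜 : Type*} [RCLike 𝕜]

lemma PosDef.smul_add_one_sub_smul {X Y : Matrix n n 𝕜} (hX : X.PosDef) (hY : Y.PosDef)
    {l : ℝ} (hl : l ∈ Set.Icc (0 : ℝ) 1) : (l • X + (1 - l) • Y).PosDef := by
  obtain ⟨hl0, hl1⟩ := hl
  rcases hl0.eq_or_lt with rfl | hl0
  · simpa using hY
  · exact (hX.smul hl0).add_posSemidef (hY.posSemidef.smul (by linarith))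

variable [Fintype n] [DecidableEq n]

lemma PosDef.posSemidef_fromBlocks_inv_one_one_self {X : Matrix n n 𝕜} (hX : X.PosDef) :
    (fromBlocks X⁻¹ 1 1 X).PosSemidef := by
  have := hX.isUnit.invertible
  simpa using (hX.fromBlocks₂₂ X⁻¹ (1 : Matrix n n 𝕜)).mpr
    (by simpa using PosSemidef.zero)

lemma PosDef.posSemidef_smul_inv_add_one_sub_smul_inv_sub_inv {X Y : Matrix n n 𝕜}
    (hX : X.PosDef) (hY : Y.PosDef) {l : ℝ} (hl : l ∈ Set.Icc (0 : ℝ) 1) :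
    (l • X⁻¹ + (1 - l) • Y⁻¹ - (l • X + (1 - l) • Y)⁻¹).PosSemidef := by
  have hZ := hX.smul_add_one_sub_smul hY hl
  have := hZ.isUnit.invertible
  have hblocks :
      (fromBlocks (l • X⁻¹ + (1 - l) • Y⁻¹) 1 1 (l • X + (1 - l) • Y)).PosSemidef := by
    obtain ⟨hl0, hl1⟩ := hl
    have hone : (1 : Matrix n n 𝕜) = l • 1 + (1 - l) • 1 := by module
    rw [show fromBlocks (l • X⁻¹ + (1 - l) • Y⁻¹) 1 1 (l • X + (1 - l) • Y) =
        l • fromBlocks X⁻¹ 1 1 X + (1 - l) • fromBlocks Y⁻¹ 1 1 Y by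
      rw [fromBlocks_smul, fromBlocks_smul, fromBlocks_add, ← hone]]
    exact (hX.posSemidef_fromBlocks_inv_one_one_self.smul hl0).add
      (hY.posSemidef_fromBlocks_inv_one_one_self.smul (sub_nonneg.mpr hl1))
  simpa using (hZ.fromBlocks₂₂ _ (1 : Matrix n n 𝕜)).mp (by simpa using hblocks)

end Matrix

open Matrix

lemma ftMat_zero {n : ℕ} (M : Matrix (Fin n) (Fin n) ℂ) : ftMat 0 M = M - 1 := by
  simp [ftMat]

lemma ftMat_eq_smul_one_sub_inv {n : ℕ} {t : ℝ} (ht : t ≠ 0) {M N : Matrix (Fin n) (Fin n) ℂ}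
    (hN_def : N = t • M + (1 - t) • 1) (hN : IsUnit N) : ftMat t M = t⁻¹ • (1 - N⁻¹) := by
  have hM : M - 1 = t⁻¹ • (N - 1) := by
    rw [hN_def]
    match_scalars <;> field_simp; ring
  rw [ftMat, ← hN_def, hM, smul_mul_assoc, sub_mul, one_mul,
    mul_nonsing_inv _ ((isUnit_iff_isUnit_det _).mp hN)]

theorem ftMat_operator_concave_general {n : ℕ} (t : ℝ) (ht : t ∈ Set.Icc (0 : ℝ) 1)
    (A B : Matrix (Fin n) (Fin n) ℂ) (hA : A.PosDef) (hB : B.PosDef)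
    (l : ℝ) (hl : l ∈ Set.Icc (0 : ℝ) 1) :
    (ftMat t (l • A + (1 - l) • B) - l • ftMat t A - (1 - l) • ftMat t B).PosSemidef := by
  rcases ht.1.eq_or_lt with rfl | ht0
  · rw [ftMat_zero, ftMat_zero, ftMat_zero,
      show l • A + (1 - l) • B - 1 - l • (A - 1) - (1 - l) • (B - 1) = 0 by module]
    exact .zero
  set NA := t • A + (1 - t) • (1 : Matrix (Fin n) (Fin n) ℂ) with hNA
  set NB := t • B + (1 - t) • (1 : Matrix (Fin n) (Fin n) ℂ) with hNB
  have hNA_pos : NA.PosDef := hA.smul_add_one_sub_smul PosDef.one ht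
  have hNB_pos : NB.PosDef := hB.smul_add_one_sub_smul PosDef.one ht
  have hN_affine : l • NA + (1 - l) • NB = t • (l • A + (1 - l) • B) + (1 - t) • 1 := by
    rw [hNA, hNB]; module
  rw [ftMat_eq_smul_one_sub_inv ht0.ne' hN_affine
      (hNA_pos.smul_add_one_sub_smul hNB_pos hl).isUnit,
    ftMat_eq_smul_one_sub_inv ht0.ne' hNA hNA_pos.isUnit,
    ftMat_eq_smul_one_sub_inv ht0.ne' hNB hNB_pos.isUnit,
    show t⁻¹ • (1 - (l • NA + (1 - l) • NB)⁻¹) - l • t⁻¹ • (1 - NA⁻¹)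
        - (1 - l) • t⁻¹ • (1 - NB⁻¹)
      = t⁻¹ • (l • NA⁻¹ + (1 - l) • NB⁻¹ - (l • NA + (1 - l) • NB)⁻¹) by module]
  exact (hNA_pos.posSemidef_smul_inv_add_one_sub_smul_inv_sub_inv hNB_pos hl).smul
    (inv_nonneg.mpr ht0.le)

/-- For `t ∈ [0,1]`, the function `f_t(M) = (M - I)(tM + (1-t)I)⁻¹` is operator concave on
positive definite Hermitian complex matrices: for positive definite `A, B` and `λ ∈ [0,1]`,
`f_t(λA + (1-λ)B) - λ·f_t(A) - (1-λ)·f_t(B)` is positive semidefinite. -/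
theorem ftMat_operator_concave {n : ℕ} (hn : 1 ≤ n) (t : ℝ) (ht : t ∈ Set.Icc (0 : ℝ) 1)
    (A B : Matrix (Fin n) (Fin n) ℂ) (hA : A.PosDef) (hB : B.PosDef)
    (l : ℝ) (hl : l ∈ Set.Icc (0 : ℝ) 1) :
    (ftMat t (l • A + (1 - l) • B) - l • ftMat t A - (1 - l) • ftMat t B).PosSemidef :=
  ftMat_operator_concave_general t ht A B hA hB l hl
end

section
/- Let t ∈ (0,1], let n ≥ 1, and let ρ, σ be n×n positive definite Hermitian complex matrices with spectral decompositions ρ = Σ_j λ_j P_j and σ = Σ_k μ_k Q_k, where λ_j, μ_k > 0 and P_j, Q_k are the orthogonal spectral projections. Define D_{−f_t}(ρ‖σ) = −Σ_{j,k} λ_j f_t(μ_k·λ_j^{−1})·tr(P_j Q_k). Then D_{−f_t}(ρ‖σ) = −inf_Z (1/t)·[ tr(ρ) + tr(ρ(Z + Z*)) + (1−t)·tr(ρ Z* Z) + t·tr(σ Z Z*) ], where the infimum is over all n×n complex matrices Z (each quantity inside the infimum is a real number since ρ and σ are Hermitian). -/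
open scoped ComplexOrder Matrix

/-!
For `0 ≤ 1 - t` and `0 ≤ t` the objective is a convex quadratic function of `Z`, so it attains
its infimum at any solution `Z₀` of the stationarity equation `ρ + (1 - t) Z₀ ρ + t σ Z₀ = 0`:
completing the square gives the value `tr ρ + tr (ρ Z₀)` plus
`(1 - t) tr (ρ Wᴴ W) + t tr (σ W Wᴴ) ≥ 0` with `W = Z - Z₀`. In the two spectral decompositions
the equation decouples, and `Z₀ = -∑ⱼₖ λⱼ / ((1 - t) λⱼ + t μₖ) Qₖ Pⱼ` solves it. The minimum is then
`∑ⱼₖ λⱼ (1 - λⱼ / ((1 - t) λⱼ + t μₖ)) tr (Pⱼ Qₖ)`, which is `t ∑ⱼₖ λⱼ f_t(μₖ / λⱼ) tr (Pⱼ Qₖ)`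
because `f_t(μ / λ) = (μ - λ) / ((1 - t) λ + t μ)`.
-/

open Matrix

section Algebra

variable {𝕜 A : Type*} [CommSemiring 𝕜] [Semiring A] [Algebra 𝕜 A]
  {I J K : Type*} [Fintype I] [Fintype J] [Fintype K]

namespace OrthogonalIdempotents

variable {e : I → A}

theorem mul_sum_smul (he : OrthogonalIdempotents e) (c : I → 𝕜) (i : I) :
    e i * ∑ j, c j • e j = c i • e i := by
  classical
  simp [Finset.mul_sum, he.mul_eq]

theorem sum_smul_mul (he : OrthogonalIdempotents e) (c : I → 𝕜) (i : I) :
    (∑ j, c j • e j) * e i = c i • e i := by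
  classical
  simp [Finset.sum_mul, he.mul_eq]

end OrthogonalIdempotents

variable (𝕜) in
def doubleSum (P : J → A) (Q : K → A) : (J → K → 𝕜) →ₗ[𝕜] A where
  toFun w := ∑ j, ∑ k, w j k • (Q k * P j)
  map_add' w v := by simp only [Pi.add_apply, add_smul, Finset.sum_add_distrib]
  map_smul' a w := by
    simp only [Pi.smul_apply, smul_eq_mul, mul_smul, Finset.smul_sum, RingHom.id_apply]

variable {P : J → A} {Q : K → A}

theorem doubleSum_apply (w : J → K → 𝕜) :
    doubleSum 𝕜 P Q w = ∑ j, ∑ k, w j k • (Q k * P j) := rfl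

theorem doubleSum_mul_sum_smul (hP : OrthogonalIdempotents P) (w : J → K → 𝕜) (lam : J → 𝕜) :
    doubleSum 𝕜 P Q w * ∑ j, lam j • P j = doubleSum 𝕜 P Q (fun j k => w j k * lam j) := by
  simp only [doubleSum_apply, Finset.sum_mul, smul_mul_assoc, mul_assoc, hP.mul_sum_smul,
    mul_smul_comm, smul_smul]

theorem sum_smul_mul_doubleSum (hQ : OrthogonalIdempotents Q) (w : J → K → 𝕜) (mu : K → 𝕜) :
    (∑ k, mu k • Q k) * doubleSum 𝕜 P Q w = doubleSum 𝕜 P Q (fun j k => mu k * w j k) := by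
  simp only [doubleSum_apply, Finset.mul_sum, mul_smul_comm, ← mul_assoc, hQ.sum_smul_mul,
    smul_mul_assoc, smul_smul, mul_comm]

theorem sum_smul_eq_doubleSum (hQ : ∑ k, Q k = 1) (lam : J → 𝕜) :
    ∑ j, lam j • P j = doubleSum 𝕜 P Q (fun j _ => lam j) := by
  simp only [doubleSum_apply, ← Finset.smul_sum, ← Finset.sum_mul, hQ, one_mul]

theorem doubleSum_one (hP : ∑ j, P j = 1) (hQ : ∑ k, Q k = 1) :
    doubleSum 𝕜 P Q (1 : J → K → 𝕜) = 1 := by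
  have h := sum_smul_eq_doubleSum (𝕜 := 𝕜) (P := P) hQ 1
  simp only [Pi.one_apply, one_smul, hP] at h
  exact h.symm

end Algebra

section Stationary

variable {𝕜 A : Type*} [CommRing 𝕜] [Ring A] [Algebra 𝕜 A] {J K : Type*} [Fintype J] [Fintype K]
  {P : J → A} {Q : K → A}

theorem add_smul_neg_doubleSum_mul_add_smul_mul_neg_doubleSum_eq_zero
    (hP : OrthogonalIdempotents P) (hQ : CompleteOrthogonalIdempotents Q)
    {lam : J → 𝕜} {mu : K → 𝕜} {w : J → K → 𝕜} {c d : 𝕜}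
    (hw : ∀ j k, w j k * (c * lam j + d * mu k) = lam j) {ρ σ : A}
    (hρ : ρ = ∑ j, lam j • P j) (hσ : σ = ∑ k, mu k • Q k) :
    ρ + c • (-doubleSum 𝕜 P Q w * ρ) + d • (σ * -doubleSum 𝕜 P Q w) = 0 := by
  subst hρ hσ
  rw [neg_mul, mul_neg, doubleSum_mul_sum_smul hP,
    sum_smul_mul_doubleSum hQ.toOrthogonalIdempotents, sum_smul_eq_doubleSum hQ.complete,
    ← map_neg, ← map_neg, ← map_smul, ← map_smul, ← map_add, ← map_add,
    ← map_zero (doubleSum 𝕜 P Q)]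
  congr 1
  ext j k
  simp only [Pi.add_apply, Pi.smul_apply, Pi.neg_apply, smul_eq_mul, Pi.zero_apply]
  linear_combination -hw j k

end Stationary

section Trace

variable {𝕜 : Type*} [CommRing 𝕜] {m J K : Type*} [Fintype m] [DecidableEq m] [Fintype J]
  [Fintype K] {P : J → Matrix m m 𝕜} {Q : K → Matrix m m 𝕜}

theorem trace_sum_smul_mul_doubleSum (hP : OrthogonalIdempotents P) (lam : J → 𝕜)
    (w : J → K → 𝕜) :
    trace ((∑ j, lam j • P j) * doubleSum 𝕜 P Q w)
      = ∑ j, ∑ k, w j k * lam j * trace (P j * Q k) := by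
  simp only [doubleSum_apply, Finset.mul_sum, trace_sum, mul_smul_comm, trace_smul, smul_eq_mul]
  refine Finset.sum_congr rfl fun j _ => Finset.sum_congr rfl fun k _ => ?_
  rw [← Matrix.mul_assoc, trace_mul_cycle, hP.mul_sum_smul, smul_mul_assoc, trace_smul,
    smul_eq_mul, mul_assoc]

theorem trace_add_trace_mul_neg_doubleSum (hP : CompleteOrthogonalIdempotents P)
    (hQ : ∑ k, Q k = 1) (lam : J → 𝕜) (w : J → K → 𝕜) :
    trace (∑ j, lam j • P j) + trace ((∑ j, lam j • P j) * -doubleSum 𝕜 P Q w)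
      = ∑ j, ∑ k, (1 - w j k) * lam j * trace (P j * Q k) := by
  calc _ = trace ((∑ j, lam j • P j) * doubleSum 𝕜 P Q (1 - w)) := by
        rw [map_sub, doubleSum_one hP.complete hQ, Matrix.mul_sub, Matrix.mul_one, trace_sub,
          Matrix.mul_neg, trace_neg, sub_eq_add_neg]
    _ = _ := trace_sum_smul_mul_doubleSum hP.toOrthogonalIdempotents lam _

end Trace

section Quadratic

variable {R m : Type*} [CommRing R] [StarRing R] [Fintype m] {A B Z₀ : Matrix m m R} {c d : R}

theorem conjTranspose_stationary (hA : A.IsHermitian) (hB : B.IsHermitian)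
    (hc : IsSelfAdjoint c) (hd : IsSelfAdjoint d) (h : A + c • (Z₀ * A) + d • (B * Z₀) = 0) :
    A + c • (A * Z₀ᴴ) + d • (Z₀ᴴ * B) = 0 := by
  simpa [conjTranspose_smul, hA.eq, hB.eq, hc.star_eq, hd.star_eq] using congrArg conjTranspose h

theorem trace_quadratic_add_of_stationary (hA : A.IsHermitian) (hB : B.IsHermitian)
    (hc : IsSelfAdjoint c) (hd : IsSelfAdjoint d) (h : A + c • (Z₀ * A) + d • (B * Z₀) = 0)
    (W : Matrix m m R) :
    trace (A * ((Z₀ + W) + (Z₀ + W)ᴴ)) + c * trace (A * ((Z₀ + W)ᴴ * (Z₀ + W)))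
        + d * trace (B * ((Z₀ + W) * (Z₀ + W)ᴴ))
      = trace (A * Z₀) + c * trace (A * (Wᴴ * W)) + d * trace (B * (W * Wᴴ)) := by
  have h₁ : trace ((Z₀ + W)ᴴ * (A + c • (Z₀ * A) + d • (B * Z₀))) = 0 := by
    rw [h, Matrix.mul_zero, trace_zero]
  have h₂ : trace ((A + c • (A * Z₀ᴴ) + d • (Z₀ᴴ * B)) * W) = 0 := by
    rw [conjTranspose_stationary hA hB hc hd h, Matrix.zero_mul, trace_zero]
  simp only [conjTranspose_add, Matrix.mul_add, Matrix.add_mul, Matrix.mul_smul, Matrix.smul_mul,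
    trace_add, trace_smul, smul_eq_mul] at h₁ h₂ ⊢
  rw [trace_mul_comm Z₀ᴴ, trace_mul_comm Wᴴ A, trace_mul_cycle' Z₀ᴴ, trace_mul_cycle' Wᴴ Z₀,
    ← trace_mul_cycle' B Z₀ Z₀ᴴ, ← trace_mul_cycle' B Z₀ Wᴴ] at h₁
  rw [← trace_mul_cycle B W Z₀ᴴ, Matrix.mul_assoc, Matrix.mul_assoc] at h₂
  linear_combination h₁ + h₂

end Quadratic

section Objective

variable {m : Type*} [Fintype m] {A B Z₀ : Matrix m m ℂ}

theorem Matrix.PosSemidef.re_trace_mul_conjTranspose_mul_self_nonneg (hA : A.PosSemidef)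
    (W : Matrix m m ℂ) : 0 ≤ (trace (A * (Wᴴ * W))).re := by
  rw [trace_mul_cycle', ← Matrix.mul_assoc]
  exact (Complex.nonneg_iff.1 (hA.mul_mul_conjTranspose_same W).trace_nonneg).1

theorem Matrix.PosSemidef.re_trace_mul_mul_conjTranspose_self_nonneg (hA : A.PosSemidef)
    (W : Matrix m m ℂ) : 0 ≤ (trace (A * (W * Wᴴ))).re := by
  rw [← Matrix.mul_assoc, trace_mul_comm, ← Matrix.mul_assoc]
  exact (Complex.nonneg_iff.1 (hA.conjTranspose_mul_mul_same W).trace_nonneg).1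

theorem isLeast_re_trace_objective (hA : A.PosSemidef) (hB : B.PosSemidef) {c d : ℝ}
    (hc : 0 ≤ c) (hd : 0 ≤ d) (h : A + (c : ℂ) • (Z₀ * A) + (d : ℂ) • (B * Z₀) = 0) :
    IsLeast (Set.range fun Z => (trace A).re + (trace (A * (Z + Zᴴ))).re
        + c * (trace (A * (Zᴴ * Z))).re + d * (trace (B * (Z * Zᴴ))).re)
      ((trace A).re + (trace (A * Z₀)).re) := by
  have key : ∀ W, (trace A).re + (trace (A * ((Z₀ + W) + (Z₀ + W)ᴴ))).re
      + c * (trace (A * ((Z₀ + W)ᴴ * (Z₀ + W)))).re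
      + d * (trace (B * ((Z₀ + W) * (Z₀ + W)ᴴ))).re
      = (trace A).re + (trace (A * Z₀)).re + c * (trace (A * (Wᴴ * W))).re
        + d * (trace (B * (W * Wᴴ))).re := fun W => by
    have := congrArg Complex.re <| trace_quadratic_add_of_stationary hA.isHermitian hB.isHermitian
      (Complex.conj_ofReal c) (Complex.conj_ofReal d) h W
    simp only [Complex.add_re, Complex.re_ofReal_mul] at this
    linear_combination this
  refine ⟨⟨Z₀, by simpa using key 0⟩, ?_⟩
  rintro _ ⟨Z, rfl⟩
  have hZ := key (Z - Z₀)
  rw [add_sub_cancel] at hZ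
  dsimp only
  rw [hZ, add_assoc]
  exact le_add_of_nonneg_right <| add_nonneg
    (mul_nonneg hc (hA.re_trace_mul_conjTranspose_mul_self_nonneg _))
    (mul_nonneg hd (hB.re_trace_mul_mul_conjTranspose_self_nonneg _))

end Objective

theorem mul_ft_mul_inv {t lam mu : ℝ} (ht : t ≠ 0) (hlam : lam ≠ 0)
    (ha : (1 - t) * lam + t * mu ≠ 0) :
    lam * ft t (mu * lam⁻¹) = 1 / t * ((1 - lam / ((1 - t) * lam + t * mu)) * lam) := by
  have h : t * (mu * lam⁻¹ - 1) + 1 = ((1 - t) * lam + t * mu) / lam := by field_simp; ring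
  rw [ft, h, one_sub_div ha]
  field_simp
  ring

theorem Dft_variational_general (t : ℝ) (ht : t ∈ Set.Ioc (0 : ℝ) 1) (n : ℕ)
    (ρ σ : Matrix (Fin n) (Fin n) ℂ) (hρ : ρ.PosDef) (hσ : σ.PosDef)
    (J K : ℕ) (lam : Fin J → ℝ) (mu : Fin K → ℝ)
    (P : Fin J → Matrix (Fin n) (Fin n) ℂ) (Q : Fin K → Matrix (Fin n) (Fin n) ℂ)
    (hlam : ∀ j, 0 < lam j) (hmu : ∀ k, 0 < mu k)
    (hPorth : ∀ j j', j ≠ j' → P j * P j' = 0) (hQorth : ∀ k k', k ≠ k' → Q k * Q k' = 0)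
    (hPsum : ∑ j, P j = 1) (hQsum : ∑ k, Q k = 1)
    (hρdec : ρ = ∑ j, (lam j : ℂ) • P j) (hσdec : σ = ∑ k, (mu k : ℂ) • Q k) :
    (-∑ j, ∑ k, lam j * ft t (mu k * (lam j)⁻¹) * (Matrix.trace (P j * Q k)).re) =
      -⨅ Z : Matrix (Fin n) (Fin n) ℂ,
        (1 / t) * ((Matrix.trace ρ).re + (Matrix.trace (ρ * (Z + Zᴴ))).re +
          (1 - t) * (Matrix.trace (ρ * (Zᴴ * Z))).re +
          t * (Matrix.trace (σ * (Z * Zᴴ))).re) := by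
  obtain ⟨ht0, ht1⟩ := ht
  have hP := CompleteOrthogonalIdempotents.iff_ortho_complete.2 ⟨hPorth, hPsum⟩
  have hQ := CompleteOrthogonalIdempotents.iff_ortho_complete.2 ⟨hQorth, hQsum⟩
  have ha : ∀ j k, (1 - t) * lam j + t * mu k ≠ 0 := fun j k =>
    (by nlinarith [hlam j, hmu k] : 0 < (1 - t) * lam j + t * mu k).ne'
  set w : Fin J → Fin K → ℂ := fun j k => ((lam j / ((1 - t) * lam j + t * mu k) : ℝ) : ℂ)
  have hw : ∀ j k, w j k * (((1 - t : ℝ) : ℂ) * lam j + (t : ℂ) * mu k) = lam j := fun j k => by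
    simp only [w, ← Complex.ofReal_mul, ← Complex.ofReal_add, div_mul_cancel₀ _ (ha j k)]
  have hmin := isLeast_re_trace_objective hρ.posSemidef hσ.posSemidef (by linarith) ht0.le
    (add_smul_neg_doubleSum_mul_add_smul_mul_neg_doubleSum_eq_zero hP.toOrthogonalIdempotents hQ
      hw hρdec hσdec)
  have hval : 1 / t * ((trace ρ).re + (trace (ρ * -doubleSum ℂ P Q w)).re)
      = ∑ j, ∑ k, lam j * ft t (mu k * (lam j)⁻¹) * (trace (P j * Q k)).re := by
    rw [← Complex.add_re, hρdec, trace_add_trace_mul_neg_doubleSum hP hQsum]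
    simp only [Complex.re_sum, Finset.mul_sum, w, ← Complex.ofReal_one, ← Complex.ofReal_sub,
      ← Complex.ofReal_mul, Complex.re_ofReal_mul,
      mul_ft_mul_inv ht0.ne' (hlam _).ne' (ha _ _), mul_assoc]
  have := (monotone_mul_left_of_nonneg (by positivity : 0 ≤ 1 / t)).map_isLeast hmin
  rw [← Set.range_comp, hval] at this
  exact congrArg Neg.neg this.isGLB.ciInf_eq.symm

/-- Variational expression for the standard `(-f_t)`-divergence (Brown–Fawzi–Fawzi):
for `t ∈ (0,1]` and positive definite Hermitian `ρ = ∑_j λ_j P_j`, `σ = ∑_k μ_k Q_k`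
(spectral decompositions with `λ_j, μ_k > 0` and orthogonal spectral projections `P_j, Q_k`),
`D_{-f_t}(ρ‖σ) = -∑_{j,k} λ_j f_t(μ_k λ_j⁻¹) tr(P_j Q_k)` satisfies
`D_{-f_t}(ρ‖σ) = -inf_Z (1/t)[tr ρ + tr(ρ(Z+Z*)) + (1-t) tr(ρ Z*Z) + t tr(σ Z Z*)]`
with the infimum over all `n × n` complex matrices `Z`. -/
theorem Dft_variational (t : ℝ) (ht : t ∈ Set.Ioc (0 : ℝ) 1) (n : ℕ) (hn : 1 ≤ n)
    (ρ σ : Matrix (Fin n) (Fin n) ℂ) (hρ : ρ.PosDef) (hσ : σ.PosDef)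
    (J K : ℕ) (lam : Fin J → ℝ) (mu : Fin K → ℝ)
    (P : Fin J → Matrix (Fin n) (Fin n) ℂ) (Q : Fin K → Matrix (Fin n) (Fin n) ℂ)
    (hlam : ∀ j, 0 < lam j) (hmu : ∀ k, 0 < mu k)
    (hPherm : ∀ j, (P j).IsHermitian) (hQherm : ∀ k, (Q k).IsHermitian)
    (hPproj : ∀ j, P j * P j = P j) (hQproj : ∀ k, Q k * Q k = Q k)
    (hPorth : ∀ j j', j ≠ j' → P j * P j' = 0) (hQorth : ∀ k k', k ≠ k' → Q k * Q k' = 0)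
    (hPsum : ∑ j, P j = 1) (hQsum : ∑ k, Q k = 1)
    (hρdec : ρ = ∑ j, (lam j : ℂ) • P j) (hσdec : σ = ∑ k, (mu k : ℂ) • Q k) :
    (-∑ j, ∑ k, lam j * ft t (mu k * (lam j)⁻¹) * (Matrix.trace (P j * Q k)).re) =
      -⨅ Z : Matrix (Fin n) (Fin n) ℂ,
        (1 / t) * ((Matrix.trace ρ).re + (Matrix.trace (ρ * (Z + Zᴴ))).re +
          (1 - t) * (Matrix.trace (ρ * (Zᴴ * Z))).re +
          t * (Matrix.trace (σ * (Z * Zᴴ))).re) :=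
  Dft_variational_general t ht n ρ σ hρ hσ J K lam mu P Q hlam hmu hPorth hQorth hPsum hQsum hρdec
    hσdec
end

section
/- Let ρ be a density matrix and σ a positive semidefinite Hermitian matrix on ℂ^n, with spectral decompositions ρ = Σ_j λ_j P_j and σ = Σ_k μ_k Q_k. For t ∈ (0,1) define D_{−f_t}(ρ‖σ) = −Σ_{j:λ_j>0} Σ_{k:μ_k>0} λ_j f_t(μ_k λ_j^{−1}) tr(P_j Q_k) + (1/(1−t))·tr(ρ(I − σ⁰)), where σ⁰ is the orthogonal projection onto the support of σ. Then lim_{t→0⁺} D_{−f_t}(ρ‖σ) = 1 − tr(ρ⁰ σ), where ρ⁰ is the orthogonal projection onto the support of ρ. -/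
open scoped ComplexOrder Matrix

/-- The orthogonal projection onto the support of a Hermitian matrix, defined via its spectral
decomposition: `σ⁰ = ∑_{k : μ_k ≠ 0} |w_k⟩⟨w_k|`. (Junk value `0` if the matrix fails to be
Hermitian.) -/
noncomputable def suppProj {N : Type*} [Fintype N] [DecidableEq N] (σ : Matrix N N ℂ) :
    Matrix N N ℂ :=
  if h : σ.IsHermitian then
    ∑ k ∈ Finset.univ.filter (fun k => h.eigenvalues k ≠ 0),
      Matrix.of (fun i j => (h.eigenvectorBasis k) i * star ((h.eigenvectorBasis k) j))
  else 0

/-- The standard `(-f_t)`-divergence of two Hermitian positive semidefinite matrices for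
`t ∈ (0,1)`, including the `-f_t(0⁺) = 1/(1-t)` term:
`D_{-f_t}(ρ‖σ) = -∑_{j : λ_j > 0} ∑_{k : μ_k > 0} λ_j f_t(μ_k λ_j⁻¹) tr(P_j Q_k)
+ (1/(1-t))·tr(ρ(I - σ⁰))`, where `tr(P_j Q_k) = ‖⟨v_j, w_k⟩‖²` for eigenvectors `v_j` of `ρ`
and `w_k` of `σ`. (Junk value `0` if either matrix fails to be Hermitian.) -/
noncomputable def DnegFull {N : Type*} [Fintype N] [DecidableEq N] (t : ℝ)
    (ρ σ : Matrix N N ℂ) : ℝ :=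
  if h : ρ.IsHermitian ∧ σ.IsHermitian then
    (-∑ j ∈ Finset.univ.filter (fun j => 0 < h.1.eigenvalues j),
        ∑ k ∈ Finset.univ.filter (fun k => 0 < h.2.eigenvalues k),
          h.1.eigenvalues j * ft t (h.2.eigenvalues k * (h.1.eigenvalues j)⁻¹) *
            ‖(inner ℂ (h.1.eigenvectorBasis j) (h.2.eigenvectorBasis k) : ℂ)‖ ^ 2) +
      (1 / (1 - t)) * (Matrix.trace (ρ * (1 - suppProj σ))).re
  else 0

/-! At `t = 0` the denominators `t(x-1)+1` and `1-t` equal `1`, so `D_{-f_t}(ρ‖σ)` is continuous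
in `t` there and its limit is the value at `t = 0`, where `f_0(x) = x - 1`. Expanding `ρ`, `σ` and
their support projections in eigenprojections, with `c_jk = tr(P_j Q_k)`, the term
`-λ_j f_0(μ_k/λ_j) c_jk = (λ_j - μ_k) c_jk` contributes `λ_j c_jk`, which cancels `tr(ρσ⁰)` inside
`tr(ρ(I - σ⁰)) = 1 - tr(ρσ⁰)`, and `-μ_k c_jk`, which sums to `-tr(ρ⁰σ)`. -/

open scoped InnerProductSpace

namespace Matrix
variable {𝕜 N : Type*} [RCLike 𝕜] [Fintype N]

lemma trace_vecMulVec_star_mul_vecMulVec_star (v w : EuclideanSpace 𝕜 N) :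
    trace (vecMulVec ⇑v (star ⇑v) * vecMulVec ⇑w (star ⇑w)) = ((‖⟪v, w⟫_𝕜‖ ^ 2 : ℝ) : 𝕜) := by
  have hinner : star ⇑v ⬝ᵥ ⇑w = ⟪v, w⟫_𝕜 := by
    rw [EuclideanSpace.inner_eq_star_dotProduct, dotProduct_comm]
  have hstar : ⇑v ⬝ᵥ star ⇑w = star (star ⇑v ⬝ᵥ ⇑w) := by
    rw [star_dotProduct, star_star, dotProduct_comm]
  rw [vecMulVec_mul_vecMulVec, trace_vecMulVec, dotProduct_smul, smul_eq_mul, hstar, hinner]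
  exact_mod_cast RCLike.mul_conj _

lemma IsHermitian.eq_sum_eigenvalues_smul [DecidableEq N] {A : Matrix N N 𝕜}
    (hA : A.IsHermitian) :
    A = ∑ k, (hA.eigenvalues k : 𝕜) •
      vecMulVec ⇑(hA.eigenvectorBasis k) (star ⇑(hA.eigenvectorBasis k)) := by
  ext i j
  conv_lhs => rw [hA.spectral_theorem, Unitary.conjStarAlgAut_apply, mul_apply]
  simp only [mul_diagonal, star_apply, sum_apply, smul_apply, eigenvectorUnitary_apply,
    vecMulVec_apply, Pi.star_apply, Function.comp_apply]
  exact Finset.sum_congr rfl fun _ _ => by ring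

lemma PosSemidef.eq_sum_pos_eigenvalues_smul [DecidableEq N] {A : Matrix N N 𝕜}
    (hA : A.PosSemidef) :
    A = ∑ k ∈ Finset.univ.filter (fun k => 0 < hA.isHermitian.eigenvalues k),
      (hA.isHermitian.eigenvalues k : 𝕜) • vecMulVec ⇑(hA.isHermitian.eigenvectorBasis k)
        (star ⇑(hA.isHermitian.eigenvectorBasis k)) := by
  rw [Finset.sum_filter_of_ne fun k _ hk => (hA.eigenvalues_nonneg k).lt_of_ne' ?_]
  · exact hA.isHermitian.eq_sum_eigenvalues_smul
  · rintro h
    simp [h] at hk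

end Matrix

open Matrix

section
variable {N : Type*} [Fintype N] [DecidableEq N]

lemma suppProj_eq_sum_pos_eigenvalues {A : Matrix N N ℂ} (hA : A.PosSemidef) :
    suppProj A = ∑ k ∈ Finset.univ.filter (fun k => 0 < hA.isHermitian.eigenvalues k),
      vecMulVec ⇑(hA.isHermitian.eigenvectorBasis k)
        (star ⇑(hA.isHermitian.eigenvectorBasis k)) := by
  rw [suppProj, dif_pos hA.isHermitian]
  exact Finset.sum_congr (Finset.filter_congr fun k _ => (hA.eigenvalues_nonneg k).lt_iff_ne'.symm)
    fun _ _ => rfl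

variable {ρ σ : Matrix N N ℂ} (hρ : ρ.PosSemidef) (hσ : σ.PosSemidef)
include hρ hσ

lemma re_trace_mul_suppProj :
    (trace (ρ * suppProj σ)).re =
      ∑ j ∈ Finset.univ.filter (fun j => 0 < hρ.isHermitian.eigenvalues j),
        ∑ k ∈ Finset.univ.filter (fun k => 0 < hσ.isHermitian.eigenvalues k),
          hρ.isHermitian.eigenvalues j *
            ‖⟪hρ.isHermitian.eigenvectorBasis j, hσ.isHermitian.eigenvectorBasis k⟫_ℂ‖ ^ 2 := by
  conv_lhs => rw [hρ.eq_sum_pos_eigenvalues_smul, suppProj_eq_sum_pos_eigenvalues hσ]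
  simp only [Finset.sum_mul_sum, trace_sum, smul_mul_assoc, trace_smul,
    trace_vecMulVec_star_mul_vecMulVec_star, smul_eq_mul]
  norm_cast

lemma re_trace_suppProj_mul :
    (trace (suppProj ρ * σ)).re =
      ∑ j ∈ Finset.univ.filter (fun j => 0 < hρ.isHermitian.eigenvalues j),
        ∑ k ∈ Finset.univ.filter (fun k => 0 < hσ.isHermitian.eigenvalues k),
          hσ.isHermitian.eigenvalues k *
            ‖⟪hρ.isHermitian.eigenvectorBasis j, hσ.isHermitian.eigenvectorBasis k⟫_ℂ‖ ^ 2 := by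
  conv_lhs => rw [suppProj_eq_sum_pos_eigenvalues hρ, hσ.eq_sum_pos_eigenvalues_smul]
  simp only [Finset.sum_mul_sum, trace_sum, mul_smul_comm, trace_smul,
    trace_vecMulVec_star_mul_vecMulVec_star, smul_eq_mul]
  norm_cast

end

lemma ft_zero (x : ℝ) : ft 0 x = x - 1 := by simp [ft]

lemma continuousAt_DnegFull_zero {N : Type*} [Fintype N] [DecidableEq N] (ρ σ : Matrix N N ℂ) :
    ContinuousAt (fun t => DnegFull t ρ σ) 0 := by
  unfold DnegFull ft
  split_ifs
  · fun_prop (disch := norm_num)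
  · exact continuousAt_const

lemma mul_ft_zero_mul_inv {l : ℝ} (hl : l ≠ 0) (m : ℝ) : l * ft 0 (m * l⁻¹) = m - l := by
  rw [ft_zero]
  field_simp

lemma DnegFull_zero {N : Type*} [Fintype N] [DecidableEq N] {ρ σ : Matrix N N ℂ}
    (hρ : ρ.PosSemidef) (hρtr : ρ.trace = 1) (hσ : σ.PosSemidef) :
    DnegFull 0 ρ σ = 1 - (trace (suppProj ρ * σ)).re := by
  have htr : (trace (ρ * (1 - suppProj σ))).re = 1 - (trace (ρ * suppProj σ)).re := by
    rw [Matrix.mul_sub, mul_one, trace_sub, hρtr, Complex.sub_re, Complex.one_re]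
  rw [DnegFull, dif_pos ⟨hρ.isHermitian, hσ.isHermitian⟩, htr, re_trace_mul_suppProj hρ hσ,
    re_trace_suppProj_mul hρ hσ]
  rw [Finset.sum_congr rfl fun j hj => Finset.sum_congr rfl fun k _ => by
    rw [mul_ft_zero_mul_inv (Finset.mem_filter.mp hj).2.ne', sub_mul]]
  simp only [Finset.sum_sub_distrib]
  ring

theorem DnegFull_tendsto_zero_general (n : ℕ)
    (ρ σ : Matrix (Fin n) (Fin n) ℂ)
    (hρ : ρ.PosSemidef) (hρtr : ρ.trace = 1) (hσ : σ.PosSemidef) :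
    Filter.Tendsto (fun t : ℝ => DnegFull t ρ σ)
      (nhdsWithin 0 (Set.Ioi 0))
      (nhds (1 - (Matrix.trace (suppProj ρ * σ)).re)) := by
  rw [← DnegFull_zero hρ hρtr hσ]
  exact (continuousAt_DnegFull_zero ρ σ).tendsto.mono_left nhdsWithin_le_nhds

/-- As `t → 0⁺`, the divergence `D_{-f_t}(ρ‖σ)` of a density matrix `ρ` and a positive
semidefinite matrix `σ` tends to `1 - tr(ρ⁰σ)`, where `ρ⁰` is the orthogonal projection onto
the support of `ρ`. -/
theorem DnegFull_tendsto_zero (n : ℕ) (hn : 1 ≤ n)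
    (ρ σ : Matrix (Fin n) (Fin n) ℂ)
    (hρ : ρ.PosSemidef) (hρtr : ρ.trace = 1) (hσ : σ.PosSemidef) :
    Filter.Tendsto (fun t : ℝ => DnegFull t ρ σ)
      (nhdsWithin 0 (Set.Ioi 0))
      (nhds (1 - (Matrix.trace (suppProj ρ * σ)).re)) :=
  DnegFull_tendsto_zero_general n ρ σ hρ hρtr hσ
end
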